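/- arXiv:2507.12729 — 10 statements merged into one kernel-verified Lean document; each statement's English description precedes it below -/
import Mathlib

section
/- Fix n₃ ≥ 1 and an orthogonal matrix M ∈ ℝ^{n₃×n₃} (MᵀM = I). Let X be a tensor of size n × 1 × n₃ and A a tensor of size n × n × n₃. Then ⟨X, A ⋆_M X⟩ = ⟨A, X ⋆_M Xᵀ⟩. -/
open Matrix BigOperators Kronecker

noncomputable section

/-- The tubal `⋆_M`-product of tubes `a, b : Fin n₃ → R`:
`a ⋆_M b = M⁻¹ *ᵥ ((M *ᵥ a) ⊙ (M *ᵥ b))`, where `⊙` is the entrywise product. -/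
def tubMul {n₃ : ℕ} {R : Type} [CommRing R] (M : Matrix (Fin n₃) (Fin n₃) R)
    (a b : Fin n₃ → R) : Fin n₃ → R :=
  M⁻¹ *ᵥ ((M *ᵥ a) * (M *ᵥ b))

/-- The tensor `⋆_M`-product of an `ι × κ × n₃` tensor with a `κ × μ × n₃` tensor. -/
def tenMul {n₃ : ℕ} {R : Type} [CommRing R] {ι κ μ : Type} [Fintype κ]
    (M : Matrix (Fin n₃) (Fin n₃) R)
    (A : ι → κ → (Fin n₃ → R)) (B : κ → μ → (Fin n₃ → R)) : ι → μ → (Fin n₃ → R) :=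
  fun i j => ∑ ℓ, tubMul M (A i ℓ) (B ℓ j)

/-- The `⋆_M`-transpose of a tensor. -/
def tenTrans {ι κ γ : Type} (A : ι → κ → γ) : κ → ι → γ := fun i j => A j i

/-- The inner product of two same-size third order tensors. -/
def tenInner {n₃ : ℕ} {ι κ : Type} [Fintype ι] [Fintype κ]
    (A B : ι → κ → (Fin n₃ → ℝ)) : ℝ :=
  ∑ i, ∑ j, ∑ k, A i j k * B i j k

/-- A square tensor is `⋆_M`-positive semidefinite if it is `⋆_M`-symmetric and
`⟨X, A ⋆_M X⟩ ≥ 0` for all `X` of size `n × 1 × n₃`. -/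
def tenPSD {n₃ : ℕ} {ι : Type} [Fintype ι] (M : Matrix (Fin n₃) (Fin n₃) ℝ)
    (A : ι → ι → (Fin n₃ → ℝ)) : Prop :=
  tenTrans A = A ∧ ∀ X : ι → Fin 1 → (Fin n₃ → ℝ), 0 ≤ tenInner X (tenMul M A X)

/-- The multiplicative identity tube `e_M = M⁻¹ 𝟙`. -/
def tubOne {n₃ : ℕ} (M : Matrix (Fin n₃) (Fin n₃) ℝ) : Fin n₃ → ℝ :=
  M⁻¹ *ᵥ (fun _ => 1)

/-- The `⋆_M`-identity tensor. -/
def tenId {n₃ : ℕ} {ι : Type} [DecidableEq ι] (M : Matrix (Fin n₃) (Fin n₃) ℝ) :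
    ι → ι → (Fin n₃ → ℝ) :=
  fun i j => if i = j then tubOne M else 0

/-- The block matricization `mat_M(A)`: the `(i,j)` block is `diag(M *ᵥ A i j)`. -/
def tenMat {n₃ : ℕ} {ι κ : Type} (M : Matrix (Fin n₃) (Fin n₃) ℝ)
    (A : ι → κ → (Fin n₃ → ℝ)) : Matrix (ι × Fin n₃) (κ × Fin n₃) ℝ :=
  Matrix.of fun p q => if p.2 = q.2 then (M *ᵥ A p.1 q.1) p.2 else 0

lemma tenInner_eq_sum_dotProduct {n₃ : ℕ} {ι κ : Type} [Fintype ι] [Fintype κ]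
    (A B : ι → κ → (Fin n₃ → ℝ)) : tenInner A B = ∑ i, ∑ j, A i j ⬝ᵥ B i j :=
  rfl

/-- For orthogonal `M`, `(a, b, c) ↦ ⟨a, b ⋆_M c⟩` is the symmetric trilinear form
`∑ p, (M a)_p (M b)_p (M c)_p`. -/
lemma dotProduct_tubMul_comm {n₃ : ℕ} {R : Type} [CommRing R]
    {M : Matrix (Fin n₃) (Fin n₃) R} (hM : Mᵀ * M = 1) (a b c : Fin n₃ → R) :
    a ⬝ᵥ tubMul M b c = b ⬝ᵥ tubMul M a c := by
  have hdot (x y : Fin n₃ → R) : x ⬝ᵥ tubMul M y c = (M *ᵥ x) ⬝ᵥ ((M *ᵥ y) * (M *ᵥ c)) := by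
    rw [tubMul, inv_eq_left_inv hM, dotProduct_mulVec, vecMul_transpose]
  rw [hdot, hdot]
  exact Finset.sum_congr rfl fun p _ => by simp only [Pi.mul_apply]; ring

lemma tenInner_tenMul_eq_tenInner_tenMul_tenTrans {n₃ : ℕ} {ι κ μ : Type}
    [Fintype ι] [Fintype κ] [Fintype μ] {M : Matrix (Fin n₃) (Fin n₃) ℝ} (hM : Mᵀ * M = 1)
    (X : ι → μ → (Fin n₃ → ℝ)) (A : ι → κ → (Fin n₃ → ℝ)) (Y : κ → μ → (Fin n₃ → ℝ)) :
    tenInner X (tenMul M A Y) = tenInner A (tenMul M X (tenTrans Y)) := by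
  calc tenInner X (tenMul M A Y)
      = ∑ i, ∑ j, ∑ ℓ, X i j ⬝ᵥ tubMul M (A i ℓ) (Y ℓ j) := by
        simp only [tenInner_eq_sum_dotProduct, tenMul, dotProduct_sum]
    _ = ∑ i, ∑ j, ∑ ℓ, A i ℓ ⬝ᵥ tubMul M (X i j) (Y ℓ j) := by
        simp only [dotProduct_tubMul_comm hM (X _ _)]
    _ = ∑ i, ∑ ℓ, ∑ j, A i ℓ ⬝ᵥ tubMul M (X i j) (Y ℓ j) :=
        Finset.sum_congr rfl fun i _ => Finset.sum_comm
    _ = tenInner A (tenMul M X (tenTrans Y)) := by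
        simp only [tenInner_eq_sum_dotProduct, tenMul, tenTrans, dotProduct_sum]

theorem inner_tmul_eq_inner_outer_general (n₃ n : ℕ)
    (M : Matrix (Fin n₃) (Fin n₃) ℝ) (hM : Mᵀ * M = 1)
    (X : Fin n → Fin 1 → (Fin n₃ → ℝ))
    (A : Fin n → Fin n → (Fin n₃ → ℝ)) :
    tenInner X (tenMul M A X) = tenInner A (tenMul M X (tenTrans X)) :=
  tenInner_tenMul_eq_tenInner_tenMul_tenTrans hM X A X

/-- For orthogonal `M`, `⟨X, A ⋆_M X⟩ = ⟨A, X ⋆_M Xᵀ⟩`. -/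
theorem inner_tmul_eq_inner_outer (n₃ n : ℕ) (hn₃ : 1 ≤ n₃)
    (M : Matrix (Fin n₃) (Fin n₃) ℝ) (hM : Mᵀ * M = 1)
    (X : Fin n → Fin 1 → (Fin n₃ → ℝ))
    (A : Fin n → Fin n → (Fin n₃ → ℝ)) :
    tenInner X (tenMul M A X) = tenInner A (tenMul M X (tenTrans X)) :=
  inner_tmul_eq_inner_outer_general n₃ n M hM X A

end
end

section
/- Fix n₃ ≥ 1 and an orthogonal matrix M ∈ ℝ^{n₃×n₃} (MᵀM = I). Let A be a ⋆_M-symmetric tensor of size n × n × n₃. Then A is ⋆_M-positive semidefinite if and only if the n·n₃ × n·n₃ real matrix (Iₙ ⊗ Mᵀ) · mat_M(A) · (Iₙ ⊗ M) is a positive semidefinite matrix. -/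
open Matrix BigOperators Kronecker

noncomputable section

/-!
For orthogonal `M` we have `M⁻¹ = Mᵀ`, so `⟨a, b ⋆_M c⟩ = ∑ₛ (M a)ₛ (M b)ₛ (M c)ₛ`: in the transform
domain the tubal product is entrywise. Hence `⟨X, A ⋆_M X⟩` is the quadratic form of `mat_M(A)` at
`(Iₙ ⊗ M) x`, where `x` is `X` flattened, i.e. the quadratic form of
`(Iₙ ⊗ Mᵀ) mat_M(A) (Iₙ ⊗ M)` at `x`; and every vector `x` arises from some `X`.
-/

section MatrixLemmas

variable {R : Type*} [CommSemiring R]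

theorem one_kronecker_mulVec_apply {ι m : Type*} [Fintype ι] [DecidableEq ι] [Fintype m]
    (M : Matrix m m R) (x : ι × m → R) (i : ι) (s : m) :
    (((1 : Matrix ι ι R) ⊗ₖ M) *ᵥ x) (i, s) = (M *ᵥ fun k => x (i, k)) s := by
  simp [mulVec, dotProduct, Fintype.sum_prod_type, kroneckerMap_apply, one_apply, ite_mul]

theorem dotProduct_transpose_mul_mul_mulVec {m k : Type*} [Fintype m] [Fintype k]
    (K : Matrix m k R) (T : Matrix m m R) (x : k → R) :
    x ⬝ᵥ (Kᵀ * T * K) *ᵥ x = (K *ᵥ x) ⬝ᵥ T *ᵥ (K *ᵥ x) := by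
  rw [← mulVec_mulVec, ← mulVec_mulVec, dotProduct_transpose_mulVec, dotProduct_comm]

end MatrixLemmas

theorem dotProduct_tubMul_of_transpose_mul_self {n₃ : ℕ} {R : Type} [CommRing R]
    {M : Matrix (Fin n₃) (Fin n₃) R} (hM : Mᵀ * M = 1) (a b c : Fin n₃ → R) :
    a ⬝ᵥ tubMul M b c = ∑ s, (M *ᵥ a) s * (M *ᵥ b) s * (M *ᵥ c) s := by
  rw [tubMul, inv_eq_left_inv hM, dotProduct_mulVec, vecMul_transpose]
  simp only [dotProduct, Pi.mul_apply, mul_assoc]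

def tenSliceVec {n₃ : ℕ} {R ι μ : Type} (X : ι → μ → (Fin n₃ → R)) (j : μ) :
    ι × Fin n₃ → R :=
  fun p => X p.1 j p.2

section TenMat

variable {n₃ : ℕ} {ι κ : Type} (M : Matrix (Fin n₃) (Fin n₃) ℝ)

theorem tenMat_transpose (A : ι → κ → (Fin n₃ → ℝ)) :
    (tenMat M A)ᵀ = tenMat M (tenTrans A) := by
  ext p q
  by_cases h : p.2 = q.2 <;> simp [tenMat, tenTrans, h, eq_comm]

theorem tenMat_mulVec_apply [Fintype κ] (A : ι → κ → (Fin n₃ → ℝ)) (z : κ × Fin n₃ → ℝ)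
    (i : ι) (s : Fin n₃) : (tenMat M A *ᵥ z) (i, s) = ∑ j, (M *ᵥ A i j) s * z (j, s) := by
  simp [mulVec, dotProduct, tenMat, Fintype.sum_prod_type, ite_mul]

theorem dotProduct_tenMat_mulVec [Fintype ι] [Fintype κ] (A : ι → κ → (Fin n₃ → ℝ))
    (y : ι × Fin n₃ → ℝ) (z : κ × Fin n₃ → ℝ) :
    y ⬝ᵥ tenMat M A *ᵥ z = ∑ i, ∑ j, ∑ s, y (i, s) * (M *ᵥ A i j) s * z (j, s) := by
  simp only [dotProduct, Fintype.sum_prod_type, tenMat_mulVec_apply, Finset.mul_sum, mul_assoc]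
  exact Finset.sum_congr rfl fun i _ => Finset.sum_comm

end TenMat

theorem tenInner_tenMul_eq_sum_dotProduct_tenMat_mulVec {n₃ : ℕ} {ι κ μ : Type} [Fintype ι]
    [DecidableEq ι] [Fintype κ] [DecidableEq κ] [Fintype μ] {M : Matrix (Fin n₃) (Fin n₃) ℝ}
    (hM : Mᵀ * M = 1) (X : ι → μ → (Fin n₃ → ℝ)) (A : ι → κ → (Fin n₃ → ℝ))
    (Y : κ → μ → (Fin n₃ → ℝ)) :
    tenInner X (tenMul M A Y) = ∑ j, ((1 : Matrix ι ι ℝ) ⊗ₖ M) *ᵥ tenSliceVec X j ⬝ᵥ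
      tenMat M A *ᵥ (((1 : Matrix κ κ ℝ) ⊗ₖ M) *ᵥ tenSliceVec Y j) := by
  calc tenInner X (tenMul M A Y)
      = ∑ i, ∑ j, ∑ ℓ, X i j ⬝ᵥ tubMul M (A i ℓ) (Y ℓ j) := by
        simp only [tenInner, tenMul, ← dotProduct_sum]; rfl
    _ = _ := by
        simp only [dotProduct_tubMul_of_transpose_mul_self hM, dotProduct_tenMat_mulVec,
          one_kronecker_mulVec_apply, tenSliceVec]
        exact Finset.sum_comm

theorem tenPSD_iff_matrix_representative_posSemidef_general (n₃ n : ℕ)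
    (M : Matrix (Fin n₃) (Fin n₃) ℝ) (hM : Mᵀ * M = 1)
    (A : Fin n → Fin n → (Fin n₃ → ℝ)) (hA : tenTrans A = A) :
    tenPSD M A ↔
      (((1 : Matrix (Fin n) (Fin n) ℝ) ⊗ₖ Mᵀ) * tenMat M A *
        ((1 : Matrix (Fin n) (Fin n) ℝ) ⊗ₖ M)).PosSemidef := by
  set K := (1 : Matrix (Fin n) (Fin n) ℝ) ⊗ₖ M
  have hKT : (1 : Matrix (Fin n) (Fin n) ℝ) ⊗ₖ Mᵀ = Kᵀ := by
    rw [← kroneckerMap_transpose, transpose_one]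
  have hquad : ∀ X : Fin n → Fin 1 → (Fin n₃ → ℝ), tenInner X (tenMul M A X) =
      tenSliceVec X 0 ⬝ᵥ (Kᵀ * tenMat M A * K) *ᵥ tenSliceVec X 0 := by
    intro X
    rw [tenInner_tenMul_eq_sum_dotProduct_tenMat_mulVec hM, Fin.sum_univ_one,
      dotProduct_transpose_mul_mul_mulVec]
  have hherm : (Kᵀ * tenMat M A * K).IsHermitian := by
    have hT : (tenMat M A).IsHermitian := by
      rw [IsHermitian, conjTranspose_eq_transpose_of_trivial, tenMat_transpose, hA]
    simpa only [conjTranspose_eq_transpose_of_trivial] using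
      isHermitian_conjTranspose_mul_mul K hT
  rw [hKT, posSemidef_iff_dotProduct_mulVec, tenPSD, and_iff_right hA, and_iff_right hherm]
  simp only [star_trivial]
  constructor
  · intro h x
    exact hquad (fun i _ k => x (i, k)) ▸ h _
  · intro h X
    exact (hquad X).symm ▸ h _

/-- A `⋆_M`-symmetric tensor `A` is `⋆_M`-PSD iff the matrix
`(Iₙ ⊗ Mᵀ) · mat_M(A) · (Iₙ ⊗ M)` is positive semidefinite. -/
theorem tenPSD_iff_matrix_representative_posSemidef (n₃ n : ℕ) (hn₃ : 1 ≤ n₃)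
    (M : Matrix (Fin n₃) (Fin n₃) ℝ) (hM : Mᵀ * M = 1)
    (A : Fin n → Fin n → (Fin n₃ → ℝ)) (hA : tenTrans A = A) :
    tenPSD M A ↔
      (((1 : Matrix (Fin n) (Fin n) ℝ) ⊗ₖ Mᵀ) * tenMat M A *
        ((1 : Matrix (Fin n) (Fin n) ℝ) ⊗ₖ M)).PosSemidef :=
  tenPSD_iff_matrix_representative_posSemidef_general n₃ n M hM A hA

end
end

section
/- Fix n₃ ≥ 1 and an orthogonal matrix M ∈ ℝ^{n₃×n₃} (MᵀM = I). Let A be an f-diagonal tensor of size n × n × n₃, i.e. A_{i,j} = 0 for all i ≠ j. Then A is ⋆_M-positive semidefinite if and only if for each i ∈ {1,…,n} the diagonal tube A_{i,i} is a square in ℝ_M, i.e. A_{i,i} = x ⋆_M x for some x ∈ ℝ^{n₃}. -/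
/-! For orthogonal `M` the form `⟨X, A ⋆_M X⟩` of an f-diagonal `A` diagonalises as
`∑ i j k, (M A_ii)_k (M X_ij)_k ^ 2`, so it is nonnegative for all `X` iff every transform
`M A_ii` is entrywise nonnegative. A tube `a` is a square in `ℝ_M` iff `M a ≥ 0` as well
(take `x = M⁻¹ √(M a)`), since `⋆_M` is the entrywise product after transforming by `M`. -/

open Matrix BigOperators Kronecker

noncomputable section

section Tube

variable {n₃ : ℕ}

@[simp]
lemma tubMul_zero_left {R : Type} [CommRing R] (M : Matrix (Fin n₃) (Fin n₃) R)
    (b : Fin n₃ → R) : tubMul M 0 b = 0 := by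
  simp [tubMul]

lemma mulVec_tubMul {R : Type} [CommRing R] {M : Matrix (Fin n₃) (Fin n₃) R}
    (hM : IsUnit M.det) (a b : Fin n₃ → R) :
    M *ᵥ tubMul M a b = (M *ᵥ a) * (M *ᵥ b) := by
  rw [tubMul, mulVec_mulVec, mul_nonsing_inv M hM, one_mulVec]

lemma exists_tubMul_self_eq_iff {M : Matrix (Fin n₃) (Fin n₃) ℝ} (hM : IsUnit M.det)
    (a : Fin n₃ → ℝ) : (∃ x, tubMul M x x = a) ↔ 0 ≤ M *ᵥ a := by
  constructor
  · rintro ⟨x, rfl⟩ k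
    rw [mulVec_tubMul hM]
    exact mul_self_nonneg _
  · intro ha
    let r : Fin n₃ → ℝ := fun k => √((M *ᵥ a) k)
    refine ⟨M⁻¹ *ᵥ r, ?_⟩
    have hr : r * r = M *ᵥ a := funext fun k => Real.mul_self_sqrt (ha k)
    rw [tubMul, mulVec_mulVec, mul_nonsing_inv M hM, one_mulVec, hr, mulVec_mulVec,
      nonsing_inv_mul M hM, one_mulVec]

lemma dotProduct_tubMul {M : Matrix (Fin n₃) (Fin n₃) ℝ} (hM : Mᵀ * M = 1)
    (x a y : Fin n₃ → ℝ) :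
    x ⬝ᵥ tubMul M a y = ∑ k, (M *ᵥ a) k * ((M *ᵥ x) k * (M *ᵥ y) k) := by
  rw [tubMul, inv_eq_left_inv hM, dotProduct_mulVec, vecMul_transpose]
  simp only [dotProduct, Pi.mul_apply]
  exact Finset.sum_congr rfl fun k _ => by ring

end Tube

lemma forall_sum_mul_sq_nonneg_iff {ι : Type} [Fintype ι] [DecidableEq ι] (d : ι → ℝ) :
    (∀ y : ι → ℝ, 0 ≤ ∑ k, d k * y k ^ 2) ↔ 0 ≤ d := by
  refine ⟨fun h k => by simpa [Pi.single_apply] using h (Pi.single k 1), fun hd y => ?_⟩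
  exact Finset.sum_nonneg fun k _ => mul_nonneg (hd k) (sq_nonneg _)

lemma tenTrans_eq_self_of_fdiagonal {ι γ : Type} [Zero γ] {A : ι → ι → γ}
    (hdiag : ∀ i j, i ≠ j → A i j = 0) : tenTrans A = A := by
  funext i j
  by_cases hij : i = j
  · subst hij; rfl
  · exact (hdiag j i (Ne.symm hij)).trans (hdiag i j hij).symm

section FDiagonal

variable {n₃ : ℕ} {ι : Type} [Fintype ι] {M : Matrix (Fin n₃) (Fin n₃) ℝ}
  {A : ι → ι → (Fin n₃ → ℝ)}

lemma tenMul_apply_of_fdiagonal (hdiag : ∀ i j, i ≠ j → A i j = 0) {μ : Type}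
    (B : ι → μ → (Fin n₃ → ℝ)) (i : ι) (j : μ) :
    tenMul M A B i j = tubMul M (A i i) (B i j) :=
  Finset.sum_eq_single_of_mem i (Finset.mem_univ i) fun l _ hl => by
    rw [hdiag i l (Ne.symm hl), tubMul_zero_left]

lemma tenInner_tenMul_of_fdiagonal (hM : Mᵀ * M = 1) (hdiag : ∀ i j, i ≠ j → A i j = 0)
    {μ : Type} [Fintype μ] (X : ι → μ → (Fin n₃ → ℝ)) :
    tenInner X (tenMul M A X) = ∑ i, ∑ j, ∑ k, (M *ᵥ A i i) k * (M *ᵥ X i j) k ^ 2 := by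
  refine Finset.sum_congr rfl fun i _ => Finset.sum_congr rfl fun j _ => ?_
  rw [tenMul_apply_of_fdiagonal hdiag]
  simp only [sq]
  exact dotProduct_tubMul hM _ _ _

end FDiagonal

theorem fdiagonal_tenPSD_iff_diag_squares_general (n₃ n : ℕ)
    (M : Matrix (Fin n₃) (Fin n₃) ℝ) (hM : Mᵀ * M = 1)
    (A : Fin n → Fin n → (Fin n₃ → ℝ)) (hdiag : ∀ i j : Fin n, i ≠ j → A i j = 0) :
    tenPSD M A ↔ ∀ i : Fin n, ∃ x : Fin n₃ → ℝ, tubMul M x x = A i i := by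
  have hdet : IsUnit M.det := isUnit_det_of_left_inverse hM
  simp only [exists_tubMul_self_eq_iff hdet, ← forall_sum_mul_sq_nonneg_iff, tenPSD,
    tenTrans_eq_self_of_fdiagonal hdiag, tenInner_tenMul_of_fdiagonal hM hdiag, true_and]
  constructor
  · intro hpos i y
    have hMMt : M * Mᵀ = 1 := mul_eq_one_comm.mp hM
    simpa [apply_ite, ite_apply, mulVec_mulVec, hMMt, Finset.sum_ite_irrel] using
      hpos fun l (_ : Fin 1) => if l = i then Mᵀ *ᵥ y else 0
  · exact fun h X => Finset.sum_nonneg fun i _ => Finset.sum_nonneg fun j _ => h i (M *ᵥ X i j)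

/-- An f-diagonal tensor `A` is `⋆_M`-PSD iff each diagonal tube `A i i`
is a square in `ℝ_M`. -/
theorem fdiagonal_tenPSD_iff_diag_squares (n₃ n : ℕ) (hn₃ : 1 ≤ n₃)
    (M : Matrix (Fin n₃) (Fin n₃) ℝ) (hM : Mᵀ * M = 1)
    (A : Fin n → Fin n → (Fin n₃ → ℝ)) (hdiag : ∀ i j : Fin n, i ≠ j → A i j = 0) :
    tenPSD M A ↔ ∀ i : Fin n, ∃ x : Fin n₃ → ℝ, tubMul M x x = A i i :=
  fdiagonal_tenPSD_iff_diag_squares_general n₃ n M hM A hdiag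

end
end

section
/- Fix n₃ ≥ 1 and an orthogonal matrix M ∈ ℝ^{n₃×n₃} (MᵀM = I). Let A be a ⋆_M-symmetric tensor of size n × n × n₃, let Â = A ×₃ M, and let r be the maximum over k ∈ {1,…,n₃} of the rank of the k-th frontal slice of Â. Then A is ⋆_M-positive semidefinite if and only if there exists a tensor B of size n × r × n₃ such that A = B ⋆_M Bᵀ. -/
/-!
For orthogonal `M`, the transform `X ↦ X ×₃ M` turns `⋆_M`-products into slice-wise matrix
products and `⋆_M`-transposes into slice-wise transposes, and it preserves the inner product.
Hence `A` is `⋆_M`-PSD iff every frontal slice `Â_k` is PSD, and `A = B ⋆_M Bᵀ` iff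
`Â_k = B̂_k B̂_kᵀ` for every `k`. A PSD matrix of rank at most `r` is `C Cᵀ` with `r` columns:
in its spectral decomposition only the nonzero eigenvalues, at most `r` of them, need a
square root column.
-/

open Matrix BigOperators Kronecker

noncomputable section

theorem Matrix.exists_diagonal_eq_mul_transpose {ι κ : Type*} [Fintype ι] [Fintype κ]
    [DecidableEq ι]
    {d : ι → ℝ} (hd : 0 ≤ d) (hcard : Fintype.card {i // d i ≠ 0} ≤ Fintype.card κ) :
    ∃ F : Matrix ι κ ℝ, diagonal d = F * Fᵀ := by
  classical
  obtain ⟨e⟩ := Function.Embedding.nonempty_of_card_le hcard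
  refine ⟨of fun i k => if h : d i = 0 then 0 else if e ⟨i, h⟩ = k then √(d i) else 0, ?_⟩
  ext i i'
  by_cases hi : d i = 0
  · simp [diagonal_apply, mul_apply, hi]
  by_cases hi' : d i' = 0
  · simpa [diagonal_apply, mul_apply, hi'] using fun h => h ▸ hi'
  · simp only [diagonal_apply, ne_eq, mul_apply, of_apply, hi, ↓reduceDIte, transpose_apply, hi',
      mul_ite, ite_mul, zero_mul, mul_zero, Finset.sum_ite_eq, Finset.mem_univ, ↓reduceIte,
      EmbeddingLike.apply_eq_iff_eq, Subtype.mk.injEq]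
    split_ifs with h
    · subst h
      exact (Real.mul_self_sqrt (hd i)).symm
    · rfl

theorem Matrix.PosSemidef.exists_eq_mul_transpose_of_rank_le {n κ : Type*} [Fintype n]
    [DecidableEq n] [Fintype κ] {S : Matrix n n ℝ} (hS : S.PosSemidef)
    (hrank : S.rank ≤ Fintype.card κ) : ∃ C : Matrix n κ ℝ, S = C * Cᵀ := by
  obtain ⟨F, hF⟩ := exists_diagonal_eq_mul_transpose (d := hS.1.eigenvalues)
    hS.eigenvalues_nonneg (hS.1.rank_eq_card_non_zero_eigs ▸ hrank)
  set U : Matrix n n ℝ := ↑hS.1.eigenvectorUnitary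
  refine ⟨U * F, ?_⟩
  conv_lhs => rw [hS.1.spectral_theorem, Unitary.conjStarAlgAut_apply]
  simp only [star_eq_conjTranspose, conjTranspose_eq_transpose_of_trivial,
    RCLike.ofReal_real_eq_id, Function.id_comp]
  rw [hF, transpose_mul, Matrix.mul_assoc, Matrix.mul_assoc, Matrix.mul_assoc]

theorem forall_sum_nonneg_iff {κ α β : Type*} [Fintype κ] [DecidableEq κ] [Zero α]
    [AddCommMonoid β] [PartialOrder β] [IsOrderedAddMonoid β] {q : κ → α → β}
    (hq : ∀ k, q k 0 = 0) : (∀ v : κ → α, 0 ≤ ∑ k, q k (v k)) ↔ ∀ k x, 0 ≤ q k x := by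
  refine ⟨fun h k x => ?_, fun h v => Finset.sum_nonneg fun k _ => h k (v k)⟩
  have := h (Pi.single k x)
  rwa [Fintype.sum_eq_single k fun k' hk' => by rw [Pi.single_eq_of_ne hk', hq],
    Pi.single_eq_same] at this

theorem Matrix.dotProduct_mulVec_mulVec_of_transpose_mul_self {n R : Type*} [Fintype n]
    [DecidableEq n] [CommRing R] {M : Matrix n n R} (hM : Mᵀ * M = 1) (x y : n → R) :
    (M *ᵥ x) ⬝ᵥ (M *ᵥ y) = x ⬝ᵥ y := by
  rw [dotProduct_mulVec, ← vecMul_transpose, vecMul_vecMul, hM, vecMul_one]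

section TensorSlices

variable {n₃ : ℕ} {R : Type} [CommRing R] {ι κ μ : Type}

/-- The `k`-th frontal slice of `Â = A ×₃ M`. -/
def hatSlice (M : Matrix (Fin n₃) (Fin n₃) R) (A : ι → κ → (Fin n₃ → R)) (k : Fin n₃) :
    Matrix ι κ R :=
  of fun i j => (M *ᵥ A i j) k

variable {M : Matrix (Fin n₃) (Fin n₃) R}

theorem hatSlice_tenTrans (A : ι → κ → (Fin n₃ → R)) (k : Fin n₃) :
    hatSlice M (tenTrans A) k = (hatSlice M A k)ᵀ :=
  rfl

theorem hatSlice_tenMul [Fintype κ] (hM : IsUnit M.det) (A : ι → κ → (Fin n₃ → R))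
    (B : κ → μ → (Fin n₃ → R)) (k : Fin n₃) :
    hatSlice M (tenMul M A B) k = hatSlice M A k * hatSlice M B k := by
  ext i j
  simp [hatSlice, tenMul, tubMul, mulVec_sum, mulVec_mulVec, mul_nonsing_inv _ hM, mul_apply]

theorem eq_of_forall_hatSlice_eq (hM : IsUnit M.det) {A B : ι → κ → (Fin n₃ → R)}
    (h : ∀ k, hatSlice M A k = hatSlice M B k) : A = B := by
  funext i j
  have hij : M *ᵥ A i j = M *ᵥ B i j := funext fun k => congr_fun₂ (h k) i j
  simpa [mulVec_mulVec, nonsing_inv_mul _ hM] using congrArg (M⁻¹ *ᵥ ·) hij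

theorem exists_hatSlice_eq (hM : IsUnit M.det) (C : Fin n₃ → Matrix ι κ R) :
    ∃ B : ι → κ → (Fin n₃ → R), ∀ k, hatSlice M B k = C k :=
  ⟨fun i j => M⁻¹ *ᵥ fun k => C k i j, fun k => by
    ext i j
    simp [hatSlice, mulVec_mulVec, mul_nonsing_inv _ hM]⟩

end TensorSlices

section Orthogonal

variable {n₃ : ℕ} {M : Matrix (Fin n₃) (Fin n₃) ℝ} {ι κ : Type} [Fintype ι]

theorem tenInner_eq_sum_hatSlice [Fintype κ] (hM : Mᵀ * M = 1) (X Y : ι → κ → (Fin n₃ → ℝ)) :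
    tenInner X Y = ∑ k, ∑ i, ∑ j, hatSlice M X k i j * hatSlice M Y k i j := by
  calc tenInner X Y = ∑ i, ∑ j, (M *ᵥ X i j) ⬝ᵥ (M *ᵥ Y i j) := by
        simp only [tenInner, dotProduct_mulVec_mulVec_of_transpose_mul_self hM]
        rfl
    _ = ∑ i, ∑ k, ∑ j, hatSlice M X k i j * hatSlice M Y k i j :=
        Finset.sum_congr rfl fun _ _ => Finset.sum_comm
    _ = _ := Finset.sum_comm

theorem tenInner_tenMul_self (hM : Mᵀ * M = 1) (A : ι → ι → (Fin n₃ → ℝ))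
    (X : ι → Fin 1 → (Fin n₃ → ℝ)) :
    tenInner X (tenMul M A X) =
      ∑ k, (hatSlice M X k).col 0 ⬝ᵥ (hatSlice M A k *ᵥ (hatSlice M X k).col 0) := by
  simp only [tenInner_eq_sum_hatSlice hM, hatSlice_tenMul (isUnit_det_of_left_inverse hM)]
  simp [dotProduct, mulVec, mul_apply, col]

theorem tenPSD_iff_forall_posSemidef (hM : Mᵀ * M = 1) (A : ι → ι → (Fin n₃ → ℝ)) :
    tenPSD M A ↔ ∀ k, (hatSlice M A k).PosSemidef := by
  have hdet := isUnit_det_of_left_inverse hM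
  have hsymm : tenTrans A = A ↔ ∀ k, (hatSlice M A k).IsHermitian := by
    simp only [IsHermitian, conjTranspose_eq_transpose_of_trivial, ← hatSlice_tenTrans]
    exact ⟨fun h k => by rw [h], eq_of_forall_hatSlice_eq hdet⟩
  have hcol : Function.Surjective
      fun (X : ι → Fin 1 → (Fin n₃ → ℝ)) k => (hatSlice M X k).col 0 := by
    intro v
    obtain ⟨X, hX⟩ := exists_hatSlice_eq hdet fun k => replicateCol (Fin 1) (v k)
    exact ⟨X, funext fun k => congrArg (col · 0) (hX k)⟩
  simp only [tenPSD, posSemidef_iff_dotProduct_mulVec, forall_and, hsymm,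
    tenInner_tenMul_self hM, star_trivial]
  refine and_congr Iff.rfl ?_
  rw [← forall_sum_nonneg_iff fun k => by simp]
  exact (hcol.forall (p := fun v => 0 ≤ ∑ k, v k ⬝ᵥ (hatSlice M A k *ᵥ v k))).symm

end Orthogonal

theorem tenPSD_iff_square_root_factorization_general (n₃ n : ℕ)
    (M : Matrix (Fin n₃) (Fin n₃) ℝ) (hM : Mᵀ * M = 1)
    (A : Fin n → Fin n → (Fin n₃ → ℝ)) (r : ℕ)
    (hr : r = Finset.univ.sup
      (fun k : Fin n₃ => (Matrix.of fun i j : Fin n => (M *ᵥ A i j) k).rank)) :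
    tenPSD M A ↔
      ∃ B : Fin n → Fin r → (Fin n₃ → ℝ), A = tenMul M B (tenTrans B) := by
  have hdet := isUnit_det_of_left_inverse hM
  rw [tenPSD_iff_forall_posSemidef hM]
  constructor
  · intro hpsd
    have hrank (k : Fin n₃) : (hatSlice M A k).rank ≤ Fintype.card (Fin r) := by
      rw [Fintype.card_fin, hr]
      exact Finset.le_sup (f := fun k => (hatSlice M A k).rank) (Finset.mem_univ k)
    choose C hC using fun k => (hpsd k).exists_eq_mul_transpose_of_rank_le (hrank k)
    obtain ⟨B, hB⟩ := exists_hatSlice_eq hdet C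
    refine ⟨B, eq_of_forall_hatSlice_eq hdet fun k => ?_⟩
    rw [hatSlice_tenMul hdet, hatSlice_tenTrans, hB, hC]
  · rintro ⟨B, rfl⟩ k
    rw [hatSlice_tenMul hdet, hatSlice_tenTrans, ← conjTranspose_eq_transpose_of_trivial]
    exact posSemidef_self_mul_conjTranspose _

/-- A `⋆_M`-symmetric tensor `A` is `⋆_M`-PSD iff `A = B ⋆_M Bᵀ` for some
tensor `B` of size `n × r × n₃`, where `r` is the maximal rank of a frontal slice of
`Â = A ×₃ M` (the `⋆_M`-rank of `A`). -/
theorem tenPSD_iff_square_root_factorization (n₃ n : ℕ) (hn₃ : 1 ≤ n₃)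
    (M : Matrix (Fin n₃) (Fin n₃) ℝ) (hM : Mᵀ * M = 1)
    (A : Fin n → Fin n → (Fin n₃ → ℝ)) (hA : tenTrans A = A) (r : ℕ)
    (hr : r = Finset.univ.sup
      (fun k : Fin n₃ => (Matrix.of fun i j : Fin n => (M *ᵥ A i j) k).rank)) :
    tenPSD M A ↔
      ∃ B : Fin n → Fin r → (Fin n₃ → ℝ), A = tenMul M B (tenTrans B) :=
  tenPSD_iff_square_root_factorization_general n₃ n M hM A r hr

end
end

section
/- Fix n₃ ≥ 1 and an orthogonal matrix M ∈ ℝ^{n₃×n₃} (MᵀM = I). Let C be a ⋆_M-symmetric tensor of size n × n × n₃, and for ℓ ∈ {1,…,L} let A^{(ℓ)} be ⋆_M-symmetric tensors of size n × n × n₃ and b^{(ℓ)} ∈ ℝ. Suppose that for each ℓ there is an index k_ℓ ∈ {1,…,n₃} such that all frontal slices of Â^{(ℓ)} = A^{(ℓ)} ×₃ M other than the k_ℓ-th are zero. For each k ∈ {1,…,n₃}, suppose X^{(k)} is a positive semidefinite real n × n matrix satisfying ⟨Â^{(ℓ)}_{:,:,k_ℓ}, X^{(k)}⟩ = b^{(ℓ)}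 for every ℓ with k_ℓ = k, and maximizing ⟨Ĉ_{:,:,k}, X⟩ among all positive semidefinite matrices X satisfying those constraints. Define the tensor 𝒳 of size n × n × n₃ by requiring that the k-th frontal slice of 𝒳 ×₃ M equals X^{(k)} for all k. Then 𝒳 is ⋆_M-positive semidefinite, satisfies ⟨A^{(ℓ)}, 𝒳⟩ = b^{(ℓ)} for all ℓ ∈ {1,…,L}, and for every ⋆_M-positive semidefinite tensor 𝒴 with ⟨A^{(ℓ)}, 𝒴⟩ = b^{(ℓ)} for all ℓ one has ⟨C, 𝒴⟩ ≤ ⟨C, 𝒳⟩ = Σ_{k=1}^{n₃} ⟨Ĉ_{:,:,k}, X^{(k)}⟩. -/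
open Matrix BigOperators Kronecker

noncomputable section

/-!
For orthogonal `M`, the map `A ↦ (Â_{:,:,k})ₖ` is a bijection from tensors onto `n₃`-tuples of
matrices that preserves the inner product and turns `⋆_M` into slicewise matrix multiplication.
Hence a tensor is `⋆_M`-PSD exactly when all its slices are PSD, and each constraint
`⟨A^{(ℓ)}, 𝒴⟩ = b^{(ℓ)}` only involves slice `k_ℓ`: the `M`-SDP splits into `n₃` independent
matrix SDPs, and the objective is the sum of their objectives.
-/

section SliceDecomposition

variable {n₃ : ℕ} {M : Matrix (Fin n₃) (Fin n₃) ℝ} {ι κ : Type}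

/-- The `k`-th frontal slice `Â_{:,:,k}` of `Â = A ×₃ M`. -/
def tenSlice (M : Matrix (Fin n₃) (Fin n₃) ℝ) (A : ι → κ → (Fin n₃ → ℝ)) (k : Fin n₃) :
    Matrix ι κ ℝ :=
  Matrix.of fun i j => (M *ᵥ A i j) k

theorem tenSlice_tenMul {μ : Type} [Fintype κ] (hM : IsUnit M.det)
    (A : ι → κ → (Fin n₃ → ℝ)) (B : κ → μ → (Fin n₃ → ℝ)) (k : Fin n₃) :
    tenSlice M (tenMul M A B) k = tenSlice M A k * tenSlice M B k := by
  ext i j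
  simp only [tenSlice, tenMul, tubMul, of_apply, mul_apply, mulVec_sum, mulVec_mulVec,
    mul_nonsing_inv M hM, one_mulVec, Finset.sum_apply, Pi.mul_apply]

theorem dotProduct_mulVec_mulVec_of_transpose_mul_eq_one (hM : Mᵀ * M = 1) (a b : Fin n₃ → ℝ) :
    (M *ᵥ a) ⬝ᵥ (M *ᵥ b) = a ⬝ᵥ b := by
  rw [dotProduct_mulVec, vecMul_mulVec, hM, vecMul_one]

theorem tenInner_eq_sum_tenSlice [Fintype ι] [Fintype κ] (hM : Mᵀ * M = 1)
    (A B : ι → κ → (Fin n₃ → ℝ)) :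
    tenInner A B = ∑ k, ∑ i, ∑ j, tenSlice M A k i j * tenSlice M B k i j := by
  have hslice : ∀ i j, ∑ k, A i j k * B i j k = ∑ k, (M *ᵥ A i j) k * (M *ᵥ B i j) k :=
    fun i j => (dotProduct_mulVec_mulVec_of_transpose_mul_eq_one hM (A i j) (B i j)).symm
  simp only [tenInner, tenSlice, of_apply, hslice]
  exact (Finset.sum_congr rfl fun _ _ => Finset.sum_comm).trans Finset.sum_comm

theorem Matrix.PosSemidef.sum_sum_mul_mul_nonneg [Fintype ι] [Fintype κ] {S : Matrix ι ι ℝ}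
    (hS : S.PosSemidef) (Z : Matrix ι κ ℝ) :
    0 ≤ ∑ i, ∑ j, Z i j * (S * Z) i j := by
  have htrace : ∑ i, ∑ j, Z i j * (S * Z) i j = (Zᴴ * S * Z).trace := by
    simp only [trace, diag, Matrix.mul_assoc, mul_apply (M := Zᴴ), conjTranspose_apply,
      star_trivial]
    exact Finset.sum_comm
  exact htrace ▸ (hS.conjTranspose_mul_mul_same Z).trace_nonneg

theorem exists_tenSlice_eq (hM : IsUnit M.det) (S : Fin n₃ → Matrix ι κ ℝ) :
    ∃ A : ι → κ → (Fin n₃ → ℝ), ∀ k, tenSlice M A k = S k :=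
  ⟨fun i j => M⁻¹ *ᵥ fun k => S k i j, fun k => by
    ext i j
    simp only [tenSlice, of_apply, mulVec_mulVec, mul_nonsing_inv M hM, one_mulVec]⟩

theorem tenSlice_injective (hM : IsUnit M.det) :
    Function.Injective (tenSlice M : (ι → κ → (Fin n₃ → ℝ)) → Fin n₃ → Matrix ι κ ℝ) := by
  intro A B h
  funext i j
  refine mulVec_injective_iff_isUnit.2 ((isUnit_iff_isUnit_det M).2 hM) ?_
  funext k
  exact congrFun (congrFun (congrFun h k) i) j

theorem tenTrans_eq_self_iff (hM : IsUnit M.det) (Y : ι → ι → (Fin n₃ → ℝ)) :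
    tenTrans Y = Y ↔ ∀ k, (tenSlice M Y k).IsHermitian := by
  simp only [IsHermitian, conjTranspose_eq_transpose_of_trivial, ← funext_iff]
  exact (tenSlice_injective hM).eq_iff.symm

theorem tenInner_tenMul_eq_sum_tenSlice [Fintype ι] [Fintype κ] (hM : Mᵀ * M = 1)
    (Y : ι → ι → (Fin n₃ → ℝ)) (X : ι → κ → (Fin n₃ → ℝ)) :
    tenInner X (tenMul M Y X) =
      ∑ k, ∑ i, ∑ j, tenSlice M X k i j * (tenSlice M Y k * tenSlice M X k) i j := by
  simp only [tenInner_eq_sum_tenSlice hM, tenSlice_tenMul (isUnit_det_of_left_inverse hM)]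

theorem tenPSD_iff_forall_posSemidef_tenSlice [Fintype ι] (hM : Mᵀ * M = 1)
    (Y : ι → ι → (Fin n₃ → ℝ)) :
    tenPSD M Y ↔ ∀ k, (tenSlice M Y k).PosSemidef := by
  have hdet := isUnit_det_of_left_inverse hM
  simp only [tenPSD, tenTrans_eq_self_iff hdet, posSemidef_iff_dotProduct_mulVec, forall_and,
    tenInner_tenMul_eq_sum_tenSlice hM]
  refine and_congr_right fun hsym => ⟨fun hY k x => ?_, fun hY X => ?_⟩
  · obtain ⟨X, hX⟩ := exists_tenSlice_eq hdet
      fun k' => if k' = k then replicateCol (Fin 1) x else 0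
    have hquad := hY X
    simp only [hX] at hquad
    rw [Finset.sum_eq_single k (fun k' _ hk' => by simp [hk']) (by simp)] at hquad
    simpa [replicateCol, mul_apply, dotProduct, mulVec] using hquad
  · exact Finset.sum_nonneg fun k _ =>
      (posSemidef_iff_dotProduct_mulVec.2 ⟨hsym k, hY k⟩).sum_sum_mul_mul_nonneg _

theorem tenInner_eq_of_tenSlice_eq_zero [Fintype ι] [Fintype κ] (hM : Mᵀ * M = 1)
    {A : ι → κ → (Fin n₃ → ℝ)} {k : Fin n₃} (hA : ∀ k' ≠ k, tenSlice M A k' = 0)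
    (B : ι → κ → (Fin n₃ → ℝ)) :
    tenInner A B = ∑ i, ∑ j, tenSlice M A k i j * tenSlice M B k i j := by
  rw [tenInner_eq_sum_tenSlice hM, Finset.sum_eq_single k (fun k' _ hk' => by simp [hA k' hk'])
    (by simp)]

end SliceDecomposition

theorem MSDP_solved_by_independent_slice_SDPs_general (n₃ n L : ℕ)
    (M : Matrix (Fin n₃) (Fin n₃) ℝ) (hM : Mᵀ * M = 1)
    (C : Fin n → Fin n → (Fin n₃ → ℝ))
    (A : Fin L → Fin n → Fin n → (Fin n₃ → ℝ))
    (b : Fin L → ℝ) (kk : Fin L → Fin n₃)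
    (hsparse : ∀ (ℓ : Fin L) (k : Fin n₃), k ≠ kk ℓ → ∀ i j : Fin n, (M *ᵥ A ℓ i j) k = 0)
    (X : Fin n₃ → Matrix (Fin n) (Fin n) ℝ)
    (hXpsd : ∀ k, (X k).PosSemidef)
    (hXfeas : ∀ ℓ : Fin L, ∑ i, ∑ j, (M *ᵥ A ℓ i j) (kk ℓ) * X (kk ℓ) i j = b ℓ)
    (hXopt : ∀ (k : Fin n₃) (Y : Matrix (Fin n) (Fin n) ℝ), Y.PosSemidef →
      (∀ ℓ : Fin L, kk ℓ = k → ∑ i, ∑ j, (M *ᵥ A ℓ i j) k * Y i j = b ℓ) →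
      ∑ i, ∑ j, (M *ᵥ C i j) k * Y i j ≤ ∑ i, ∑ j, (M *ᵥ C i j) k * X k i j)
    (𝒳 : Fin n → Fin n → (Fin n₃ → ℝ))
    (h𝒳 : ∀ (i j : Fin n) (k : Fin n₃), (M *ᵥ 𝒳 i j) k = X k i j) :
    tenPSD M 𝒳 ∧
    (∀ ℓ : Fin L, tenInner (A ℓ) 𝒳 = b ℓ) ∧
    (∀ Y : Fin n → Fin n → (Fin n₃ → ℝ), tenPSD M Y →
      (∀ ℓ : Fin L, tenInner (A ℓ) Y = b ℓ) → tenInner C Y ≤ tenInner C 𝒳) ∧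
    tenInner C 𝒳 = ∑ k : Fin n₃, ∑ i, ∑ j, (M *ᵥ C i j) k * X k i j := by
  have hX : ∀ k, tenSlice M 𝒳 k = X k := fun k => Matrix.ext fun i j => h𝒳 i j k
  have hconstraint : ∀ ℓ Y, tenInner (A ℓ) Y =
      ∑ i, ∑ j, tenSlice M (A ℓ) (kk ℓ) i j * tenSlice M Y (kk ℓ) i j := fun ℓ =>
    tenInner_eq_of_tenSlice_eq_zero hM fun k hk => Matrix.ext (hsparse ℓ k hk)
  have hvalue : tenInner C 𝒳 = ∑ k, ∑ i, ∑ j, (M *ᵥ C i j) k * X k i j := by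
    simp only [tenInner_eq_sum_tenSlice hM, hX]
    rfl
  refine ⟨(tenPSD_iff_forall_posSemidef_tenSlice hM 𝒳).2 fun k => hX k ▸ hXpsd k,
    fun ℓ => ?_, fun Y hY hYb => ?_, hvalue⟩
  · rw [hconstraint, hX]
    exact hXfeas ℓ
  · rw [hvalue, tenInner_eq_sum_tenSlice hM]
    refine Finset.sum_le_sum fun k _ =>
      hXopt k _ ((tenPSD_iff_forall_posSemidef_tenSlice hM Y).1 hY k) fun ℓ hℓ => ?_
    subst hℓ
    exact (hconstraint ℓ Y).symm.trans (hYb ℓ)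

/-- If each constraint tensor `A^{(ℓ)}` has a single nonzero frontal slice
`k_ℓ` in the transform domain, then slicewise optimal PSD solutions `X^{(k)}` of the `n₃`
independent matrix SDPs assemble into an optimal solution `𝒳` of the `M`-SDP:
`𝒳` is `⋆_M`-PSD, feasible, optimal, with optimal value `Σ_k ⟨Ĉ_{:,:,k}, X^{(k)}⟩`. -/
theorem MSDP_solved_by_independent_slice_SDPs (n₃ n L : ℕ) (hn₃ : 1 ≤ n₃)
    (M : Matrix (Fin n₃) (Fin n₃) ℝ) (hM : Mᵀ * M = 1)
    (C : Fin n → Fin n → (Fin n₃ → ℝ)) (hC : tenTrans C = C)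
    (A : Fin L → Fin n → Fin n → (Fin n₃ → ℝ)) (hA : ∀ ℓ, tenTrans (A ℓ) = A ℓ)
    (b : Fin L → ℝ) (kk : Fin L → Fin n₃)
    (hsparse : ∀ (ℓ : Fin L) (k : Fin n₃), k ≠ kk ℓ → ∀ i j : Fin n, (M *ᵥ A ℓ i j) k = 0)
    (X : Fin n₃ → Matrix (Fin n) (Fin n) ℝ)
    (hXpsd : ∀ k, (X k).PosSemidef)
    (hXfeas : ∀ ℓ : Fin L, ∑ i, ∑ j, (M *ᵥ A ℓ i j) (kk ℓ) * X (kk ℓ) i j = b ℓ)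
    (hXopt : ∀ (k : Fin n₃) (Y : Matrix (Fin n) (Fin n) ℝ), Y.PosSemidef →
      (∀ ℓ : Fin L, kk ℓ = k → ∑ i, ∑ j, (M *ᵥ A ℓ i j) k * Y i j = b ℓ) →
      ∑ i, ∑ j, (M *ᵥ C i j) k * Y i j ≤ ∑ i, ∑ j, (M *ᵥ C i j) k * X k i j)
    (𝒳 : Fin n → Fin n → (Fin n₃ → ℝ))
    (h𝒳 : ∀ (i j : Fin n) (k : Fin n₃), (M *ᵥ 𝒳 i j) k = X k i j) :
    tenPSD M 𝒳 ∧
    (∀ ℓ : Fin L, tenInner (A ℓ) 𝒳 = b ℓ) ∧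
    (∀ Y : Fin n → Fin n → (Fin n₃ → ℝ), tenPSD M Y →
      (∀ ℓ : Fin L, tenInner (A ℓ) Y = b ℓ) → tenInner C Y ≤ tenInner C 𝒳) ∧
    tenInner C 𝒳 = ∑ k : Fin n₃, ∑ i, ∑ j, (M *ᵥ C i j) k * X k i j :=
  MSDP_solved_by_independent_slice_SDPs_general n₃ n L M hM C A b kk hsparse X hXpsd hXfeas hXopt 𝒳
    h𝒳

end
end

section
/- Let 𝔽 be ℝ or ℂ, fix n₃ ≥ 1, let G be a finite group, ρ : G → GL_{n₃}(𝔽) a group homomorphism into invertible n₃ × n₃ matrices, and M ∈ GL_{n₃}(𝔽). Then the following are equivalent: (i) for every tube a ∈ 𝔽^{n₃}, the multiplication map T_a is ρ-equivariant, i.e. a ⋆_M (ρ(g) b) = ρ(g)(a ⋆_M b) for all g ∈ G and b ∈ 𝔽^{n₃}; (ii) for every g ∈ G, the matrix M ρ(g) M⁻¹ is diagonal. -/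
open Matrix BigOperators Kronecker

noncomputable section

/-
Conjugating by `M` turns the `⋆_M`-product into the entrywise product: with `P = M ρ(g) M⁻¹`,
`T_a` commutes with `ρ(g)` for every `a` exactly when `u ⊙ (P v) = P (u ⊙ v)` for all `u, v`.
Testing this on standard basis vectors `u = eᵢ`, `v = eⱼ` with `i ≠ j` gives `P i j = 0`;
conversely a diagonal `P` acts entrywise and so commutes with every entrywise product.
-/

namespace Matrix

variable {n R : Type*} [Fintype n] [DecidableEq n] [CommRing R]

theorem mul_mulVec_comm_iff_isDiag (P : Matrix n n R) :
    (∀ u v : n → R, u * (P *ᵥ v) = P *ᵥ (u * v)) ↔ P.IsDiag := by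
  constructor
  · intro h i j hij
    have hsingle : (Pi.single i 1 : n → R) * Pi.single j 1 = 0 := by
      ext k
      by_cases hk : k = i <;> simp_all [Pi.single_apply]
    simpa [mulVec_single_one, hsingle] using congrFun (h (Pi.single i 1) (Pi.single j 1)) i
  · intro h u v
    rw [← (isDiag_iff_diagonal_diag P).mp h]
    ext i
    simp only [Pi.mul_apply, mulVec_diagonal]
    ring

end Matrix

section TubMul

variable {n₃ : ℕ} {R : Type} [CommRing R] {M : Matrix (Fin n₃) (Fin n₃) R}

theorem tubMul_inv_mulVec (hM : IsUnit M.det) (u v : Fin n₃ → R) :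
    tubMul M (M⁻¹ *ᵥ u) (M⁻¹ *ᵥ v) = M⁻¹ *ᵥ (u * v) := by
  simp only [tubMul, mulVec_mulVec, mul_nonsing_inv _ hM, one_mulVec]

theorem tubMul_mulVec_comm_iff (hM : IsUnit M.det) (A : Matrix (Fin n₃) (Fin n₃) R) :
    (∀ a b, tubMul M a (A *ᵥ b) = A *ᵥ tubMul M a b) ↔
      ∀ u v, u * ((M * A * M⁻¹) *ᵥ v) = (M * A * M⁻¹) *ᵥ (u * v) := by
  have hsurj : Function.Surjective (M⁻¹ *ᵥ ·) := Function.LeftInverse.surjective (g := (M *ᵥ ·))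
    fun x => by simp only [mulVec_mulVec, nonsing_inv_mul _ hM, one_mulVec]
  have hinj : Function.Injective (M⁻¹ *ᵥ ·) := Function.LeftInverse.injective (g := (M *ᵥ ·))
    fun x => by simp only [mulVec_mulVec, mul_nonsing_inv _ hM, one_mulVec]
  have hA : ∀ v, A *ᵥ (M⁻¹ *ᵥ v) = M⁻¹ *ᵥ ((M * A * M⁻¹) *ᵥ v) := fun v => by
    simp only [mulVec_mulVec, ← Matrix.mul_assoc, nonsing_inv_mul _ hM, Matrix.one_mul]
  rw [hsurj.forall₂]
  refine forall₂_congr fun u v => ?_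
  rw [hA, tubMul_inv_mulVec hM, tubMul_inv_mulVec hM, hA]
  exact hinj.eq_iff

end TubMul

theorem all_tube_mul_equivariant_iff_diag_general (n₃ : ℕ)
    {𝕜 : Type} [RCLike 𝕜] (G : Type) [Group G]
    (ρ : G →* (Matrix (Fin n₃) (Fin n₃) 𝕜)ˣ)
    (M : Matrix (Fin n₃) (Fin n₃) 𝕜) (hM : IsUnit M.det) :
    (∀ (a : Fin n₃ → 𝕜) (g : G) (b : Fin n₃ → 𝕜),
        tubMul M a ((ρ g : Matrix (Fin n₃) (Fin n₃) 𝕜) *ᵥ b)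
          = (ρ g : Matrix (Fin n₃) (Fin n₃) 𝕜) *ᵥ tubMul M a b)
      ↔ ∀ g : G, (M * (ρ g : Matrix (Fin n₃) (Fin n₃) 𝕜) * M⁻¹).IsDiag := by
  rw [forall_comm]
  exact forall_congr' fun g => (tubMul_mulVec_comm_iff hM _).trans (mul_mulVec_comm_iff_isDiag _)

/-- For a finite group `G`, a representation `ρ : G → GL_{n₃}(𝔽)`
(`𝔽 = ℝ` or `ℂ`, modelled by `RCLike`), and invertible `M`, every tubal multiplication
map `T_a` is `ρ`-equivariant iff `M ρ(g) M⁻¹` is diagonal for every `g ∈ G`. -/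
theorem all_tube_mul_equivariant_iff_diag (n₃ : ℕ) (hn₃ : 1 ≤ n₃)
    {𝕜 : Type} [RCLike 𝕜] (G : Type) [Group G] [Finite G]
    (ρ : G →* (Matrix (Fin n₃) (Fin n₃) 𝕜)ˣ)
    (M : Matrix (Fin n₃) (Fin n₃) 𝕜) (hM : IsUnit M.det) :
    (∀ (a : Fin n₃ → 𝕜) (g : G) (b : Fin n₃ → 𝕜),
        tubMul M a ((ρ g : Matrix (Fin n₃) (Fin n₃) 𝕜) *ᵥ b)
          = (ρ g : Matrix (Fin n₃) (Fin n₃) 𝕜) *ᵥ tubMul M a b)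
      ↔ ∀ g : G, (M * (ρ g : Matrix (Fin n₃) (Fin n₃) 𝕜) * M⁻¹).IsDiag :=
  all_tube_mul_equivariant_iff_diag_general n₃ G ρ M hM

end
end

section
/- Let 𝔽 be ℝ or ℂ, fix n₃ ≥ 1, let G be a nonabelian finite group, and let ρ : G → GL_{n₃}(𝔽) be a faithful (injective) group homomorphism into invertible n₃ × n₃ matrices. Then for every invertible matrix M ∈ 𝔽^{n₃×n₃} there exists a tube a ∈ 𝔽^{n₃} such that the multiplication map T_a is not ρ-equivariant, i.e. there exist g ∈ G and b ∈ 𝔽^{n₃} with a ⋆_M (ρ(g) b) ≠ ρ(g)(a ⋆_M b). -/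
open Matrix BigOperators Kronecker

noncomputable section

/-!
If every `T_a` were `ρ`-equivariant, then conjugating by `M` turns each `ρ g` into a matrix that
commutes with every entrywise product `d ⊙ ·`, i.e. with every diagonal matrix; such a matrix is
diagonal. Diagonal matrices commute, so the matrices `ρ g` commute, and faithfulness of `ρ` makes
`G` abelian.
-/

section DiagonalMatrices

variable {n R : Type} [Fintype n] [DecidableEq n]

theorem isDiag_of_forall_commute_diagonal [Semiring R] {Q : Matrix n n R}
    (hQ : ∀ d : n → R, Commute (diagonal d) Q) : Q.IsDiag := by
  intro i j hij
  refine row_eq_zero_of_commute_single (i := i) ?_ (Ne.symm hij)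
  simpa only [diagonal_single] using hQ (Pi.single i 1)

theorem commute_of_injective_of_isDiag [CommSemiring R] {G : Type} [Group G]
    (σ : G →* (Matrix n n R)ˣ) (hσ : Function.Injective σ)
    (hdiag : ∀ g, (σ g : Matrix n n R).IsDiag) (g h : G) :
    Commute g h := by
  refine Commute.of_map hσ
    (Commute.of_map (f := Units.coeHom (Matrix n n R)) Units.val_injective ?_)
  rw [Units.coeHom_apply, Units.coeHom_apply, ← (hdiag g).diagonal_diag,
    ← (hdiag h).diagonal_diag]
  exact commute_diagonal _ _

end DiagonalMatrices

theorem commute_diagonal_conj_of_tubMul_equivariant {n₃ : ℕ} {R : Type} [CommRing R]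
    {M A : Matrix (Fin n₃) (Fin n₃) R} (hM : IsUnit M.det)
    (hA : ∀ a b, tubMul M a (A *ᵥ b) = A *ᵥ tubMul M a b)
    (d : Fin n₃ → R) : Commute (diagonal d) (M * A * M⁻¹) := by
  refine ext_iff_mulVec.mpr fun c => ?_
  have h := congrArg (M *ᵥ ·) (hA (M⁻¹ *ᵥ d) (M⁻¹ *ᵥ c))
  simp only [tubMul, mulVec_mulVec, mul_nonsing_inv M hM, one_mulVec] at h
  have diagonal_mulVec (v : Fin n₃ → R) : diagonal d *ᵥ v = d * v :=
    funext (mulVec_diagonal d v)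
  simpa only [← mulVec_mulVec, diagonal_mulVec] using h

theorem nonabelian_faithful_not_all_equivariant_general (n₃ : ℕ)
    {𝕜 : Type} [RCLike 𝕜] (G : Type) [Group G]
    (hG : ∃ g h : G, g * h ≠ h * g)
    (ρ : G →* (Matrix (Fin n₃) (Fin n₃) 𝕜)ˣ)
    (hρ : Function.Injective ρ) :
    ∀ M : Matrix (Fin n₃) (Fin n₃) 𝕜, IsUnit M.det →
      ∃ (a : Fin n₃ → 𝕜) (g : G) (b : Fin n₃ → 𝕜),
        tubMul M a ((ρ g : Matrix (Fin n₃) (Fin n₃) 𝕜) *ᵥ b)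
          ≠ (ρ g : Matrix (Fin n₃) (Fin n₃) 𝕜) *ᵥ tubMul M a b := by
  intro M hM
  by_contra! hequiv
  obtain ⟨g, h, hgh⟩ := hG
  let σ := (MulAut.conj (M.nonsingInvUnit hM)).toMonoidHom.comp ρ
  have hσ : Function.Injective σ := (MulAut.conj _).injective.comp hρ
  have hdiag (k : G) : (σ k : Matrix (Fin n₃) (Fin n₃) 𝕜).IsDiag :=
    isDiag_of_forall_commute_diagonal
      (commute_diagonal_conj_of_tubMul_equivariant hM (hequiv · k))
  exact hgh (commute_of_injective_of_isDiag σ hσ hdiag g h).eq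

/-- If `G` is a nonabelian finite group and `ρ` is a faithful representation,
then for every invertible `M` some tubal multiplication map `T_a` fails to be
`ρ`-equivariant. -/
theorem nonabelian_faithful_not_all_equivariant (n₃ : ℕ) (hn₃ : 1 ≤ n₃)
    {𝕜 : Type} [RCLike 𝕜] (G : Type) [Group G] [Finite G]
    (hG : ∃ g h : G, g * h ≠ h * g)
    (ρ : G →* (Matrix (Fin n₃) (Fin n₃) 𝕜)ˣ)
    (hρ : Function.Injective ρ) :
    ∀ M : Matrix (Fin n₃) (Fin n₃) 𝕜, IsUnit M.det →
      ∃ (a : Fin n₃ → 𝕜) (g : G) (b : Fin n₃ → 𝕜),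
        tubMul M a ((ρ g : Matrix (Fin n₃) (Fin n₃) 𝕜) *ᵥ b)
          ≠ (ρ g : Matrix (Fin n₃) (Fin n₃) 𝕜) *ᵥ tubMul M a b :=
  nonabelian_faithful_not_all_equivariant_general n₃ G hG ρ hρ

end
end

section
/- Fix n₃ ≥ 1, an orthogonal matrix M ∈ ℝ^{n₃×n₃} (MᵀM = I), a finite group G, and a group homomorphism ρ : G → GL_{n₃}(ℝ) such that ρ(g) is orthogonal for every g ∈ G. Let X be a ⋆_M-symmetric tensor of size n × n × n₃ such that for every pair of indices (i,j) and every g ∈ G, the diagonal matrix diag(M X_{i,j}) commutes with M ρ(g) Mᵀ. Let X̂ = (Iₙ ⊗ Mᵀ) · mat_M(X) · (Iₙ ⊗ M). Then for every g ∈ G, (Iₙ ⊗ ρ(g))ᵀ · X̂ · (Iₙ ⊗ ρ(g)) = X̂. -/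
/-! The commutation hypothesis says that `mat_M(X)` commutes with `Iₙ ⊗ (M ρ(g) Mᵀ)`; conjugating
by the orthogonal matrix `Iₙ ⊗ M` turns this into `X̂` commuting with `Iₙ ⊗ ρ(g)`, and then
`(Iₙ ⊗ ρ(g))ᵀ X̂ (Iₙ ⊗ ρ(g)) = (Iₙ ⊗ ρ(g)ᵀρ(g)) X̂ = X̂`. -/
open Matrix BigOperators Kronecker

noncomputable section

theorem Commute.conj_of_mul_eq_one {α : Type*} [Monoid α] {a b k r : α} (hba : b * a = 1)
    (h : Commute k (a * r * b)) : Commute (b * k * a) r := by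
  have hr : a * r = a * r * b * a := by rw [mul_assoc _ b, hba, mul_one]
  calc b * k * a * r = b * k * (a * r * b * a) := by rw [mul_assoc _ a, ← hr]
    _ = b * (a * r * b * k) * a := by rw [← h.eq]; simp only [mul_assoc]
    _ = b * a * r * (b * k * a) := by simp only [mul_assoc]
    _ = r * (b * k * a) := by rw [hba, one_mul]

theorem Matrix.transpose_mul_mul_eq_of_commute {m R : Type*} [Fintype m] [DecidableEq m]
    [Semiring R] {A P : Matrix m m R} (h : Commute A P) (hP : Pᵀ * P = 1) :
    Pᵀ * A * P = A := by
  rw [mul_assoc, h.eq, ← mul_assoc, hP, one_mul]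

theorem Matrix.one_kronecker_mul_one_kronecker {l m R : Type*} [Fintype l] [DecidableEq l]
    [Fintype m] [CommSemiring R] (A B : Matrix m m R) :
    ((1 : Matrix l l R) ⊗ₖ A) * (1 ⊗ₖ B) = 1 ⊗ₖ (A * B) := by
  rw [← mul_kronecker_mul, one_mul]

theorem Matrix.transpose_one_kronecker {l m R : Type*} [DecidableEq l] [MulZeroOneClass R]
    (A : Matrix m m R) : ((1 : Matrix l l R) ⊗ₖ A)ᵀ = 1 ⊗ₖ Aᵀ := by
  rw [← kroneckerMap_transpose, transpose_one]

theorem commute_tenMat_one_kronecker {n₃ : ℕ} {ι : Type} [Fintype ι] [DecidableEq ι]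
    (M N : Matrix (Fin n₃) (Fin n₃) ℝ) (X : ι → ι → (Fin n₃ → ℝ))
    (h : ∀ i j, Commute (diagonal (M *ᵥ X i j)) N) :
    Commute (tenMat M X) ((1 : Matrix ι ι ℝ) ⊗ₖ N) := by
  ext ⟨i, k⟩ ⟨j, l⟩
  have hij := congrFun (congrFun (h i j).eq k) l
  rw [diagonal_mul, mul_diagonal] at hij
  simpa [tenMat, mul_apply, Fintype.sum_prod_type, one_apply, ite_and] using hij

theorem matrix_representative_invariant_general (n₃ n : ℕ)
    (M : Matrix (Fin n₃) (Fin n₃) ℝ) (hM : Mᵀ * M = 1)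
    (G : Type) [Group G]
    (ρ : G →* (Matrix (Fin n₃) (Fin n₃) ℝ)ˣ)
    (hρ : ∀ g : G, (ρ g : Matrix (Fin n₃) (Fin n₃) ℝ)ᵀ * (ρ g : Matrix (Fin n₃) (Fin n₃) ℝ) = 1)
    (X : Fin n → Fin n → (Fin n₃ → ℝ))
    (hcomm : ∀ (i j : Fin n) (g : G),
      Commute (Matrix.diagonal (M *ᵥ X i j))
        (M * (ρ g : Matrix (Fin n₃) (Fin n₃) ℝ) * Mᵀ)) :
    ∀ g : G,
      ((1 : Matrix (Fin n) (Fin n) ℝ) ⊗ₖ (ρ g : Matrix (Fin n₃) (Fin n₃) ℝ))ᵀ *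
          (((1 : Matrix (Fin n) (Fin n) ℝ) ⊗ₖ Mᵀ) * tenMat M X *
            ((1 : Matrix (Fin n) (Fin n) ℝ) ⊗ₖ M)) *
          ((1 : Matrix (Fin n) (Fin n) ℝ) ⊗ₖ (ρ g : Matrix (Fin n₃) (Fin n₃) ℝ))
        = ((1 : Matrix (Fin n) (Fin n) ℝ) ⊗ₖ Mᵀ) * tenMat M X *
            ((1 : Matrix (Fin n) (Fin n) ℝ) ⊗ₖ M) := by
  intro g
  have hinv : ((1 : Matrix (Fin n) (Fin n) ℝ) ⊗ₖ Mᵀ) * (1 ⊗ₖ M) = 1 := by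
    rw [one_kronecker_mul_one_kronecker, hM, one_kronecker_one]
  have horth : ((1 : Matrix (Fin n) (Fin n) ℝ) ⊗ₖ (ρ g : Matrix (Fin n₃) (Fin n₃) ℝ))ᵀ *
      (1 ⊗ₖ (ρ g : Matrix (Fin n₃) (Fin n₃) ℝ)) = 1 := by
    rw [transpose_one_kronecker, one_kronecker_mul_one_kronecker, hρ g, one_kronecker_one]
  refine transpose_mul_mul_eq_of_commute (Commute.conj_of_mul_eq_one hinv ?_) horth
  rw [one_kronecker_mul_one_kronecker, one_kronecker_mul_one_kronecker]
  exact commute_tenMat_one_kronecker M _ X fun i j => hcomm i j g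

/-- If the tubes of a `⋆_M`-symmetric tensor `X` satisfy the equivariance
(commutation) condition, then its matrix representative
`X̂ = (Iₙ ⊗ Mᵀ) mat_M(X) (Iₙ ⊗ M)` is invariant: `(Iₙ ⊗ ρ(g))ᵀ X̂ (Iₙ ⊗ ρ(g)) = X̂`. -/
theorem matrix_representative_invariant (n₃ n : ℕ) (hn₃ : 1 ≤ n₃)
    (M : Matrix (Fin n₃) (Fin n₃) ℝ) (hM : Mᵀ * M = 1)
    (G : Type) [Group G] [Finite G]
    (ρ : G →* (Matrix (Fin n₃) (Fin n₃) ℝ)ˣ)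
    (hρ : ∀ g : G, (ρ g : Matrix (Fin n₃) (Fin n₃) ℝ)ᵀ * (ρ g : Matrix (Fin n₃) (Fin n₃) ℝ) = 1)
    (X : Fin n → Fin n → (Fin n₃ → ℝ)) (hX : tenTrans X = X)
    (hcomm : ∀ (i j : Fin n) (g : G),
      Commute (Matrix.diagonal (M *ᵥ X i j))
        (M * (ρ g : Matrix (Fin n₃) (Fin n₃) ℝ) * Mᵀ)) :
    ∀ g : G,
      ((1 : Matrix (Fin n) (Fin n) ℝ) ⊗ₖ (ρ g : Matrix (Fin n₃) (Fin n₃) ℝ))ᵀ *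
          (((1 : Matrix (Fin n) (Fin n) ℝ) ⊗ₖ Mᵀ) * tenMat M X *
            ((1 : Matrix (Fin n) (Fin n) ℝ) ⊗ₖ M)) *
          ((1 : Matrix (Fin n) (Fin n) ℝ) ⊗ₖ (ρ g : Matrix (Fin n₃) (Fin n₃) ℝ))
        = ((1 : Matrix (Fin n) (Fin n) ℝ) ⊗ₖ Mᵀ) * tenMat M X *
            ((1 : Matrix (Fin n) (Fin n) ℝ) ⊗ₖ M) :=
  matrix_representative_invariant_general n₃ n M hM G ρ hρ X hcomm

end
end

section
/- Fix n₃ ≥ 1, an orthogonal matrix M ∈ ℝ^{n₃×n₃} (MᵀM = I), a finite group G, and a group homomorphism ρ : G → GL_{n₃}(ℝ) with ρ(g) orthogonal for every g ∈ G. Let Q be a ⋆_M-symmetric, ⋆_M-positive semidefinite tensor of size m × m × n₃ such that for every pair (i,j) and every g ∈ G the diagonal matrix diag(M Q_{i,j}) commutes with M ρ(g) Mᵀ. Let Q̂ = (Iₘ ⊗ Mᵀ) · mat_M(Q) · (Iₘ ⊗ M) and define the quadratic form f : ℝ^{m n₃} → ℝ by f(v) = vᵀ Q̂ v. Then Q̂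 is a positive semidefinite matrix (so f is a nonnegative quadratic form, representable as a sum of squares of linear forms) and f is G-invariant: f((Iₘ ⊗ ρ(g)) v) = f(v) for every g ∈ G and every v ∈ ℝ^{m n₃}. -/
open Matrix BigOperators Kronecker

noncomputable section

/-- The matrix representative `Q̂ = (Iₘ ⊗ Mᵀ) · mat_M(Q) · (Iₘ ⊗ M)` of a tensor `Q`. -/
def repMat {n₃ m : ℕ} (M : Matrix (Fin n₃) (Fin n₃) ℝ)
    (Q : Fin m → Fin m → (Fin n₃ → ℝ)) :
    Matrix (Fin m × Fin n₃) (Fin m × Fin n₃) ℝ :=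
  ((1 : Matrix (Fin m) (Fin m) ℝ) ⊗ₖ Mᵀ) * tenMat M Q *
    ((1 : Matrix (Fin m) (Fin m) ℝ) ⊗ₖ M)
/-! For orthogonal `M`, left `⋆_M`-multiplication by a tube `a` is the symmetric matrix
`Mᵀ diag(M a) M`, and `Q̂` is the block matrix with these blocks for the tubes of `Q`. Hence
`vᵀ Q̂ v = ⟨X, Q ⋆_M X⟩` for the `m × 1 × n₃` tensor `X` whose tubes are the blocks of `v`, so `Q̂`
is positive semidefinite. Conjugating the commutation hypothesis by `M` shows that every block
commutes with `ρ(g)`, so `Q̂` commutes with the orthogonal matrix `Iₘ ⊗ ρ(g)`, and the form is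
invariant. -/

namespace Matrix

variable {n R : Type*} [CommRing R]

theorem commute_conj_of_transpose_mul_self [Fintype n] [DecidableEq n] {M A P : Matrix n n R}
    (hM : Mᵀ * M = 1) (h : Commute A (M * P * Mᵀ)) : Commute (Mᵀ * A * M) P := by
  calc Mᵀ * A * M * P = Mᵀ * (A * (M * P * Mᵀ)) * M := by
        simp only [Matrix.mul_assoc, hM, Matrix.mul_one]
    _ = Mᵀ * (M * P * Mᵀ * A) * M := by rw [h.eq]
    _ = P * (Mᵀ * A * M) := by simp only [← Matrix.mul_assoc, hM, Matrix.one_mul]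

theorem dotProduct_mulVec_mulVec_of_commute [Fintype n] [DecidableEq n] {A U : Matrix n n R}
    (hAU : Commute A U) (hU : Uᵀ * U = 1) (v : n → R) :
    (U *ᵥ v) ⬝ᵥ (A *ᵥ (U *ᵥ v)) = v ⬝ᵥ (A *ᵥ v) := by
  rw [mulVec_mulVec, hAU.eq, ← mulVec_mulVec, dotProduct_mulVec, ← mulVec_transpose,
    mulVec_mulVec, hU, one_mulVec]

theorem commute_diagonal_const_of_forall_commute [Fintype n] {m : Type*} [Fintype m] [DecidableEq m]
    {B : Matrix m m (Matrix n n R)} {P : Matrix n n R} (h : ∀ i j, Commute (B i j) P) :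
    Commute B (diagonal fun _ => P) := by
  ext i j : 1
  rw [mul_diagonal, diagonal_mul, (h i j).eq]

theorem one_kronecker_eq_comp {m : Type*} [DecidableEq m] (P : Matrix n n R) :
    (1 : Matrix m m R) ⊗ₖ P = comp _ _ _ _ R (diagonal fun _ => P) := by
  ext ⟨i, k⟩ ⟨j, l⟩
  by_cases hij : i = j <;> simp [diagonal, hij]

theorem one_kronecker_transpose_mul_self {m : Type*} [Fintype m] [DecidableEq m] [Fintype n]
    [DecidableEq n] {P : Matrix n n R} (hP : Pᵀ * P = 1) :
    ((1 : Matrix m m R) ⊗ₖ P)ᵀ * ((1 : Matrix m m R) ⊗ₖ P) = 1 := by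
  rw [← kroneckerMap_transpose, transpose_one, ← mul_kronecker_mul, Matrix.one_mul, hP,
    one_kronecker_one]

end Matrix

section

variable {n₃ m : ℕ}

def tubMulMat {R : Type} [CommRing R] (M : Matrix (Fin n₃) (Fin n₃) R) (a : Fin n₃ → R) :
    Matrix (Fin n₃) (Fin n₃) R :=
  Mᵀ * diagonal (M *ᵥ a) * M

theorem tubMul_eq_tubMulMat_mulVec {R : Type} [CommRing R] {M : Matrix (Fin n₃) (Fin n₃) R}
    (hM : Mᵀ * M = 1) (a b : Fin n₃ → R) : tubMul M a b = tubMulMat M a *ᵥ b := by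
  have hdiag : diagonal (M *ᵥ a) *ᵥ (M *ᵥ b) = (M *ᵥ a) * (M *ᵥ b) :=
    funext (mulVec_diagonal _ _)
  rw [tubMul, inv_eq_left_inv hM, tubMulMat, ← mulVec_mulVec, ← mulVec_mulVec, hdiag]

theorem tubMulMat_transpose {R : Type} [CommRing R] (M : Matrix (Fin n₃) (Fin n₃) R)
    (a : Fin n₃ → R) : (tubMulMat M a)ᵀ = tubMulMat M a := by
  simp [tubMulMat, transpose_mul, Matrix.mul_assoc]

variable (M : Matrix (Fin n₃) (Fin n₃) ℝ) (Q : Fin m → Fin m → (Fin n₃ → ℝ))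

theorem repMat_eq_comp : repMat M Q = comp _ _ _ _ ℝ (of fun i j => tubMulMat M (Q i j)) := by
  ext ⟨i, k⟩ ⟨j, l⟩
  simp [repMat, tenMat, tubMulMat, mul_apply, one_apply, Fintype.sum_prod_type,
    diagonal, Finset.sum_ite_eq, Finset.sum_ite_eq']

theorem dotProduct_repMat_mulVec (v : Fin m × Fin n₃ → ℝ) :
    v ⬝ᵥ (repMat M Q *ᵥ v) =
      ∑ i, ∑ j, (fun k => v (i, k)) ⬝ᵥ (tubMulMat M (Q i j) *ᵥ fun k => v (j, k)) := by
  simp only [repMat_eq_comp, dotProduct, mulVec, Fintype.sum_prod_type, Finset.mul_sum,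
    comp_apply, of_apply]
  exact Finset.sum_congr rfl fun i _ => Finset.sum_comm

theorem tenInner_tenMul {ι : Type} [Fintype ι] {M : Matrix (Fin n₃) (Fin n₃) ℝ} (hM : Mᵀ * M = 1)
    (A : ι → ι → (Fin n₃ → ℝ)) (X : ι → Fin 1 → (Fin n₃ → ℝ)) :
    tenInner X (tenMul M A X) = ∑ i, ∑ j, X i 0 ⬝ᵥ (tubMulMat M (A i j) *ᵥ X j 0) := by
  simp only [tenInner, tenMul, tubMul_eq_tubMulMat_mulVec hM, Fin.sum_univ_one, Finset.sum_apply,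
    dotProduct, Finset.mul_sum]
  exact Finset.sum_congr rfl fun i _ => Finset.sum_comm

theorem dotProduct_repMat_mulVec_eq_tenInner {M : Matrix (Fin n₃) (Fin n₃) ℝ} (hM : Mᵀ * M = 1)
    (v : Fin m × Fin n₃ → ℝ) :
    v ⬝ᵥ (repMat M Q *ᵥ v) =
      tenInner (fun i (_ : Fin 1) k => v (i, k)) (tenMul M Q fun i _ k => v (i, k)) := by
  rw [dotProduct_repMat_mulVec, tenInner_tenMul hM]

theorem repMat_isHermitian (hQ : tenTrans Q = Q) : (repMat M Q).IsHermitian := by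
  ext ⟨i, k⟩ ⟨j, l⟩
  have hQij : Q j i = Q i j := congrFun (congrFun hQ i) j
  simp only [conjTranspose_apply, star_trivial, repMat_eq_comp, comp_apply, of_apply, hQij]
  exact congrFun (congrFun (tubMulMat_transpose M (Q i j)) k) l

theorem repMat_posSemidef {M : Matrix (Fin n₃) (Fin n₃) ℝ} (hM : Mᵀ * M = 1) (hQ : tenPSD M Q) :
    (repMat M Q).PosSemidef :=
  .of_dotProduct_mulVec_nonneg (repMat_isHermitian M Q hQ.1) fun v => by
    simpa [dotProduct_repMat_mulVec_eq_tenInner Q hM] using hQ.2 _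

theorem commute_repMat_one_kronecker {M : Matrix (Fin n₃) (Fin n₃) ℝ} (hM : Mᵀ * M = 1)
    {P : Matrix (Fin n₃) (Fin n₃) ℝ} (h : ∀ i j, Commute (diagonal (M *ᵥ Q i j)) (M * P * Mᵀ)) :
    Commute (repMat M Q) ((1 : Matrix (Fin m) (Fin m) ℝ) ⊗ₖ P) := by
  rw [repMat_eq_comp, one_kronecker_eq_comp, ← compRingEquiv_apply, ← compRingEquiv_apply]
  exact (commute_diagonal_const_of_forall_commute fun i j =>
    commute_conj_of_transpose_mul_self hM (h i j)).map _

end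

theorem invariant_MSOS_quadratic_form_general (n₃ m : ℕ)
    (M : Matrix (Fin n₃) (Fin n₃) ℝ) (hM : Mᵀ * M = 1)
    (G : Type) [Group G]
    (ρ : G →* (Matrix (Fin n₃) (Fin n₃) ℝ)ˣ)
    (hρ : ∀ g : G, (ρ g : Matrix (Fin n₃) (Fin n₃) ℝ)ᵀ * (ρ g : Matrix (Fin n₃) (Fin n₃) ℝ) = 1)
    (Q : Fin m → Fin m → (Fin n₃ → ℝ)) (hQpsd : tenPSD M Q)
    (hcomm : ∀ (i j : Fin m) (g : G),
      Commute (Matrix.diagonal (M *ᵥ Q i j))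
        (M * (ρ g : Matrix (Fin n₃) (Fin n₃) ℝ) * Mᵀ))
    (f : (Fin m × Fin n₃ → ℝ) → ℝ)
    (hf : ∀ v : Fin m × Fin n₃ → ℝ, f v = v ⬝ᵥ (repMat M Q *ᵥ v)) :
    (repMat M Q).PosSemidef ∧
    (∀ v : Fin m × Fin n₃ → ℝ, 0 ≤ f v) ∧
    (∀ (g : G) (v : Fin m × Fin n₃ → ℝ),
      f (((1 : Matrix (Fin m) (Fin m) ℝ) ⊗ₖ (ρ g : Matrix (Fin n₃) (Fin n₃) ℝ)) *ᵥ v) = f v) := by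
  have hpsd := repMat_posSemidef Q hM hQpsd
  refine ⟨hpsd, fun v => by simpa [hf] using hpsd.dotProduct_mulVec_nonneg v, fun g v => ?_⟩
  rw [hf, hf]
  exact dotProduct_mulVec_mulVec_of_commute
    (commute_repMat_one_kronecker Q hM fun i j => hcomm i j g)
    (one_kronecker_transpose_mul_self (hρ g)) v

/-- If `Q` is a `⋆_M`-symmetric, `⋆_M`-PSD tensor whose tubes satisfy the
equivariance (commutation) condition, then the quadratic form `f(v) = vᵀ Q̂ v` given by the
matrix representative `Q̂ = (Iₘ ⊗ Mᵀ) mat_M(Q) (Iₘ ⊗ M)` is positive semidefinite (hence a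
nonnegative quadratic form, a sum of squares of linear forms) and `G`-invariant:
`f((Iₘ ⊗ ρ(g)) v) = f(v)`. -/
theorem invariant_MSOS_quadratic_form (n₃ m : ℕ) (hn₃ : 1 ≤ n₃)
    (M : Matrix (Fin n₃) (Fin n₃) ℝ) (hM : Mᵀ * M = 1)
    (G : Type) [Group G] [Finite G]
    (ρ : G →* (Matrix (Fin n₃) (Fin n₃) ℝ)ˣ)
    (hρ : ∀ g : G, (ρ g : Matrix (Fin n₃) (Fin n₃) ℝ)ᵀ * (ρ g : Matrix (Fin n₃) (Fin n₃) ℝ) = 1)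
    (Q : Fin m → Fin m → (Fin n₃ → ℝ)) (hQsym : tenTrans Q = Q) (hQpsd : tenPSD M Q)
    (hcomm : ∀ (i j : Fin m) (g : G),
      Commute (Matrix.diagonal (M *ᵥ Q i j))
        (M * (ρ g : Matrix (Fin n₃) (Fin n₃) ℝ) * Mᵀ))
    (f : (Fin m × Fin n₃ → ℝ) → ℝ)
    (hf : ∀ v : Fin m × Fin n₃ → ℝ, f v = v ⬝ᵥ (repMat M Q *ᵥ v)) :
    (repMat M Q).PosSemidef ∧
    (∀ v : Fin m × Fin n₃ → ℝ, 0 ≤ f v) ∧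
    (∀ (g : G) (v : Fin m × Fin n₃ → ℝ),
      f (((1 : Matrix (Fin m) (Fin m) ℝ) ⊗ₖ (ρ g : Matrix (Fin n₃) (Fin n₃) ℝ)) *ᵥ v) = f v) :=
  invariant_MSOS_quadratic_form_general n₃ m M hM G ρ hρ Q hQpsd hcomm f hf

end
end

section
/- Fix n₃ ≥ 1 and an orthogonal matrix M ∈ ℝ^{n₃×n₃} (MᵀM = I), and let A be a tensor of size n₁ × n₂ × n₃ over ℝ with Â = A ×₃ M. Define γ = Σ_{k=1}^{n₃} trace(((Â_{:,:,k})ᵀ Â_{:,:,k})^{1/2}), where for a positive semidefinite real matrix P, P^{1/2} denotes its positive semidefinite square root (so γ is the sum over k of the nuclear norms, i.e. sums of singular values, of the frontal slices of Â). Consider pairs (W₁, W₂) of ⋆_M-symmetric tensors of sizes n₁ × n₁ × n₃ and n₂ × n₂ × n₃ such that the block tensor W of size (n₁+n₂) × (n₁+n₂) × n₃ with blocks W₁ (top-left), A (top-right), Aᵀ (bottom-left), and W₂ (bottom-right) is ⋆_M-positive semidefinite. Then (i) for every such pair, ½⟨ℐ_M, W⟩ ≥ γ, where ℐ_M is the (n₁+n₂)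 × (n₁+n₂) × n₃ ⋆_M-identity tensor, and (ii) there exists such a pair attaining ½⟨ℐ_M, W⟩ = γ. -/
open Matrix BigOperators Kronecker

noncomputable section

/-- The `(n₁+n₂) × (n₁+n₂) × n₃` block tensor with blocks `W₁` (top-left), `A` (top-right),
`Aᵀ` (bottom-left) and `W₂` (bottom-right). -/
def blockTensor {n₃ n₁ n₂ : ℕ} (W₁ : Fin n₁ → Fin n₁ → (Fin n₃ → ℝ))
    (A : Fin n₁ → Fin n₂ → (Fin n₃ → ℝ)) (W₂ : Fin n₂ → Fin n₂ → (Fin n₃ → ℝ)) :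
    (Fin n₁ ⊕ Fin n₂) → (Fin n₁ ⊕ Fin n₂) → (Fin n₃ → ℝ) :=
  fun p q =>
    match p, q with
    | Sum.inl i, Sum.inl j => W₁ i j
    | Sum.inl i, Sum.inr j => A i j
    | Sum.inr i, Sum.inl j => A j i
    | Sum.inr i, Sum.inr j => W₂ i j

/-!
For orthogonal `M`, the transform `A ↦ Â = A ×₃ M` preserves the inner product and turns
`⋆_M`-products into products of frontal slices. So a tensor is `⋆_M`-PSD exactly when all frontal
slices of its transform are PSD, `⟨ℐ_M, W⟩` is the sum of their traces, and the theorem becomes,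
slice by slice, the semidefinite characterisation of the nuclear norm of a real matrix `B`:
with `P = (BᵀB)^{1/2}`, `2 tr P` is the least value of `tr W₁ + tr W₂` over PSD block matrices
`[[W₁, B], [Bᵀ, W₂]]`.

Let `R = cfc (·⁻¹) P`; as `0⁻¹ = 0`, this is the pseudo-inverse of `P`. Then `C = BR` is a
partial isometry, and testing the block matrix against `[-C; 1]` gives
`2 tr P ≤ tr (CᵀW₁C) + tr W₂ ≤ tr W₁ + tr W₂`. Equality holds for `W₁ = BRBᵀ`, `W₂ = P`, where
the block matrix is `Kᵀ R K` with `K = [Bᵀ P]`.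
-/

namespace Matrix

variable {m n : Type*} [Fintype m] [Fintype n]

theorem trace_fromBlocks {R : Type*} [AddCommMonoid R] (A : Matrix m m R) (B : Matrix m n R)
    (C : Matrix n m R) (D : Matrix n n R) : (fromBlocks A B C D).trace = A.trace + D.trace := by
  simp [trace, Fintype.sum_sum_type]

theorem trace_transpose_mul_mul_le_trace [DecidableEq m] {W : Matrix m m ℝ} (hW : W.PosSemidef)
    {C : Matrix m n ℝ} (hC : IsIdempotentElem (C * Cᵀ)) : (Cᵀ * W * C).trace ≤ W.trace := by
  set Q := 1 - C * Cᵀ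
  have hQ : Q * Qᵀ = Q := by
    simp only [Q, transpose_sub, transpose_one, transpose_mul, transpose_transpose, sub_mul,
      mul_sub, one_mul, mul_one, hC.eq]
    abel
  have h := (hW.conjTranspose_mul_mul_same Q).trace_nonneg
  rw [conjTranspose_eq_transpose_of_trivial, trace_mul_cycle, hQ, trace_mul_comm] at h
  have : (W * Q).trace = W.trace - (Cᵀ * W * C).trace := by
    rw [Matrix.mul_sub, Matrix.mul_one, trace_sub, ← Matrix.mul_assoc, trace_mul_cycle]
  linarith

variable [DecidableEq n] {P : Matrix n n ℝ}

theorem cfc_mul_cfc (f g : ℝ → ℝ) : cfc f P * cfc g P = cfc (fun x => f x * g x) P :=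
  (cfc_mul f g P (P.finite_real_spectrum.continuousOn f)
    (P.finite_real_spectrum.continuousOn g)).symm

theorem transpose_cfc (f : ℝ → ℝ) : (cfc f P)ᵀ = cfc f P :=
  (conjTranspose_eq_transpose_of_trivial _).symm.trans IsSelfAdjoint.cfc

section PseudoInverse

variable (hP : IsSelfAdjoint P)
include hP

theorem cfc_inv_mul_self_mul_self : cfc (·⁻¹ : ℝ → ℝ) P * P * P = P := by
  have hid : cfc (fun x : ℝ => x) P = P := cfc_id' ℝ P
  calc cfc (·⁻¹ : ℝ → ℝ) P * P * P
      = cfc (·⁻¹ : ℝ → ℝ) P * cfc (fun x : ℝ => x) P * cfc (fun x : ℝ => x) P := by rw [hid]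
    _ = P := by rw [cfc_mul_cfc, cfc_mul_cfc]; exact (cfc_congr fun x _ => by simp).trans hid

theorem mul_cfc_inv_mul_self : P * cfc (·⁻¹ : ℝ → ℝ) P * P = P := by
  have hid : cfc (fun x : ℝ => x) P = P := cfc_id' ℝ P
  calc P * cfc (·⁻¹ : ℝ → ℝ) P * P
      = cfc (fun x : ℝ => x) P * cfc (·⁻¹ : ℝ → ℝ) P * cfc (fun x : ℝ => x) P := by rw [hid]
    _ = P := by rw [cfc_mul_cfc, cfc_mul_cfc]; exact (cfc_congr fun x _ => by simp).trans hid

theorem cfc_inv_mul_self_mul_cfc_inv :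
    cfc (·⁻¹ : ℝ → ℝ) P * P * cfc (·⁻¹ : ℝ → ℝ) P = cfc (·⁻¹ : ℝ → ℝ) P := by
  have hid : cfc (fun x : ℝ => x) P = P := cfc_id' ℝ P
  calc cfc (·⁻¹ : ℝ → ℝ) P * P * cfc (·⁻¹ : ℝ → ℝ) P
      = cfc (·⁻¹ : ℝ → ℝ) P * cfc (fun x : ℝ => x) P * cfc (·⁻¹ : ℝ → ℝ) P := by rw [hid]
    _ = cfc (·⁻¹ : ℝ → ℝ) P := by
      rw [cfc_mul_cfc, cfc_mul_cfc]
      exact cfc_congr fun x _ => by simpa using mul_inv_mul_cancel x⁻¹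

end PseudoInverse

variable {B : Matrix m n ℝ}

theorem two_mul_trace_le_of_posSemidef_fromBlocks [DecidableEq m] (hP : P.IsHermitian)
    (hPB : P * P = Bᵀ * B) {W₁ : Matrix m m ℝ} {W₂ : Matrix n n ℝ}
    (hW : (fromBlocks W₁ B Bᵀ W₂).PosSemidef) : 2 * P.trace ≤ W₁.trace + W₂.trace := by
  set R := cfc (·⁻¹ : ℝ → ℝ) P
  have hRt : Rᵀ = R := transpose_cfc _
  have hRPP : R * P * P = P := cfc_inv_mul_self_mul_self hP.isSelfAdjoint
  have hRPR : R * P * R = R := cfc_inv_mul_self_mul_cfc_inv hP.isSelfAdjoint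
  set C := B * R
  have hC : IsIdempotentElem (C * Cᵀ) := by
    calc C * Cᵀ * (C * Cᵀ) = B * (R * (R * P * P) * R) * R * Bᵀ := by
          simp only [C, transpose_mul, hRt, Matrix.mul_assoc, ← Matrix.mul_assoc Bᵀ B, ← hPB]
      _ = C * Cᵀ := by
          rw [hRPP, hRPR]; simp only [C, transpose_mul, hRt, Matrix.mul_assoc]
  set Z := fromRows (-C) (1 : Matrix n n ℝ)
  have hZ : Zᴴ * fromBlocks W₁ B Bᵀ W₂ * Z = Cᵀ * W₁ * C - Cᵀ * B - Bᵀ * C + W₂ := by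
    simp only [Z, conjTranspose_eq_transpose_of_trivial, transpose_fromRows, transpose_neg,
      transpose_one, fromCols_mul_fromBlocks, fromCols_mul_fromRows, Matrix.one_mul,
      Matrix.mul_one, Matrix.neg_mul, Matrix.mul_neg, Matrix.add_mul]
    abel
  have htr : (Cᵀ * B).trace = P.trace := by
    rw [transpose_mul, hRt, Matrix.mul_assoc, ← hPB, ← Matrix.mul_assoc, hRPP]
  have htr' : (Bᵀ * C).trace = P.trace := by
    rw [← htr, ← trace_transpose, transpose_mul, transpose_transpose]
  have hW₁ : W₁.PosSemidef := hW.submatrix Sum.inl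
  have h := (hW.conjTranspose_mul_mul_same Z).trace_nonneg
  have h₁ := trace_transpose_mul_mul_le_trace hW₁ hC
  rw [hZ, trace_add, trace_sub, trace_sub, htr, htr'] at h
  linarith

theorem exists_posSemidef_fromBlocks_trace_eq (hP : P.PosSemidef) (hPB : P * P = Bᵀ * B) :
    ∃ (W₁ : Matrix m m ℝ) (W₂ : Matrix n n ℝ),
      (fromBlocks W₁ B Bᵀ W₂).PosSemidef ∧ W₁.trace + W₂.trace = 2 * P.trace := by
  have hPs : IsSelfAdjoint P := hP.isHermitian.isSelfAdjoint
  have hPt : Pᵀ = P := (conjTranspose_eq_transpose_of_trivial P).symm.trans hP.isHermitian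
  set R := cfc (·⁻¹ : ℝ → ℝ) P
  have hRt : Rᵀ = R := transpose_cfc _
  have hRPR : R * P * R = R := cfc_inv_mul_self_mul_cfc_inv hPs
  have hR : R.PosSemidef := by
    simpa only [conjTranspose_eq_transpose_of_trivial, hRt, hRPR] using
      hP.conjTranspose_mul_mul_same R
  have hPRP : P * R * P = P := mul_cfc_inv_mul_self hPs
  have hBRP : B * R * P = B := by
    have hX : Bᵀ * (B * (R * P - 1)) = 0 := by
      rw [← Matrix.mul_assoc, ← hPB, Matrix.mul_sub, Matrix.mul_one, Matrix.mul_assoc P P,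
        ← Matrix.mul_assoc P R P, hPRP, sub_self]
    have hXX : (B * (R * P - 1))ᴴ * (B * (R * P - 1)) = 0 := by
      rw [conjTranspose_eq_transpose_of_trivial, transpose_mul, Matrix.mul_assoc, hX,
        Matrix.mul_zero]
    have h := conjTranspose_mul_self_eq_zero.mp hXX
    rwa [Matrix.mul_sub, Matrix.mul_one, sub_eq_zero, ← Matrix.mul_assoc] at h
  have hPRB : P * R * Bᵀ = Bᵀ := by
    simpa only [transpose_mul, hPt, hRt, Matrix.mul_assoc] using congrArg transpose hBRP
  refine ⟨B * R * Bᵀ, P, ?_, ?_⟩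
  · have hblock : fromBlocks (B * R * Bᵀ) B Bᵀ P = (fromCols Bᵀ P)ᴴ * R * fromCols Bᵀ P := by
      rw [conjTranspose_eq_transpose_of_trivial, transpose_fromCols, transpose_transpose, hPt,
        fromRows_mul, fromRows_mul_fromCols, hBRP, hPRP, hPRB]
    rw [hblock]
    exact hR.conjTranspose_mul_mul_same _
  · rw [trace_mul_cycle, ← hPB, trace_mul_cycle, cfc_inv_mul_self_mul_self hPs]
    ring

end Matrix

section FrontalSlices

variable {n₃ : ℕ} {R : Type} [CommRing R] {M : Matrix (Fin n₃) (Fin n₃) R} {ι κ μ : Type}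

/-- The `k`-th frontal slice `Â_{:,:,k}` of `Â = A ×₃ M`. -/
def frontalSlice (M : Matrix (Fin n₃) (Fin n₃) R) (A : ι → κ → (Fin n₃ → R)) (k : Fin n₃) :
    Matrix ι κ R :=
  Matrix.of fun i j => (M *ᵥ A i j) k

def ofFrontalSlices (M : Matrix (Fin n₃) (Fin n₃) R) (S : Fin n₃ → Matrix ι κ R) :
    ι → κ → (Fin n₃ → R) :=
  fun i j => M⁻¹ *ᵥ fun k => S k i j

theorem frontalSlice_ofFrontalSlices (hM : IsUnit M.det) (S : Fin n₃ → Matrix ι κ R) :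
    frontalSlice M (ofFrontalSlices M S) = S := by
  funext k; ext i j
  simp [frontalSlice, ofFrontalSlices, mulVec_mulVec, mul_nonsing_inv M hM]

theorem frontalSlice_injective (hM : IsUnit M.det) :
    Function.Injective (frontalSlice M : (ι → κ → (Fin n₃ → R)) → _) := by
  intro A B h
  funext i j
  apply mulVec_injective_of_isUnit ((isUnit_iff_isUnit_det M).mpr hM)
  funext k
  exact congrFun (congrFun (congrFun h k) i) j

theorem frontalSlice_tenTrans (A : ι → κ → (Fin n₃ → R)) (k : Fin n₃) :
    frontalSlice M (tenTrans A) k = (frontalSlice M A k)ᵀ :=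
  rfl

theorem frontalSlice_tenMul [Fintype κ] (hM : IsUnit M.det) (A : ι → κ → (Fin n₃ → R))
    (B : κ → μ → (Fin n₃ → R)) (k : Fin n₃) :
    frontalSlice M (tenMul M A B) k = frontalSlice M A k * frontalSlice M B k := by
  ext i j
  simp [frontalSlice, tenMul, tubMul, mulVec_sum, mulVec_mulVec, mul_nonsing_inv M hM,
    Matrix.mul_apply]

end FrontalSlices

section RealFrontalSlices

variable {n₃ : ℕ} {M : Matrix (Fin n₃) (Fin n₃) ℝ} {ι κ : Type}

theorem frontalSlice_tenId [DecidableEq ι] (hM : IsUnit M.det) (k : Fin n₃) :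
    frontalSlice M (tenId M : ι → ι → _) k = 1 := by
  ext i j
  rcases eq_or_ne i j with rfl | h <;>
    simp [frontalSlice, tenId, tubOne, mulVec_mulVec, mul_nonsing_inv M hM, *]

theorem frontalSlice_blockTensor {n₁ n₂ : ℕ}
    (W₁ : Fin n₁ → Fin n₁ → (Fin n₃ → ℝ)) (A : Fin n₁ → Fin n₂ → (Fin n₃ → ℝ))
    (W₂ : Fin n₂ → Fin n₂ → (Fin n₃ → ℝ)) (k : Fin n₃) :
    frontalSlice M (blockTensor W₁ A W₂) k =
      fromBlocks (frontalSlice M W₁ k) (frontalSlice M A k) (frontalSlice M A k)ᵀ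
        (frontalSlice M W₂ k) := by
  ext (i | i) (j | j) <;> rfl

variable (hM : Mᵀ * M = 1)
include hM

theorem tenInner_eq_sum_trace [Fintype ι] [Fintype κ] (X Y : ι → κ → (Fin n₃ → ℝ)) :
    tenInner X Y = ∑ k, ((frontalSlice M X k)ᵀ * frontalSlice M Y k).trace := by
  have hdot : ∀ a b : Fin n₃ → ℝ, (M *ᵥ a) ⬝ᵥ (M *ᵥ b) = a ⬝ᵥ b := fun a b => by
    rw [dotProduct_mulVec, ← mulVec_transpose, mulVec_mulVec, hM, one_mulVec]
  calc tenInner X Y = ∑ i, ∑ j, (M *ᵥ X i j) ⬝ᵥ (M *ᵥ Y i j) := by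
        simp only [hdot]; rfl
    _ = ∑ k, ((frontalSlice M X k)ᵀ * frontalSlice M Y k).trace := by
      simp only [dotProduct, trace, diag, Matrix.mul_apply, transpose_apply, frontalSlice,
        of_apply]
      exact Finset.sum_comm.trans ((Finset.sum_congr rfl fun _ _ => Finset.sum_comm).trans
        Finset.sum_comm)

theorem tenInner_tenId [Fintype ι] [DecidableEq ι] (W : ι → ι → (Fin n₃ → ℝ)) :
    tenInner (tenId M) W = ∑ k, (frontalSlice M W k).trace := by
  simp [tenInner_eq_sum_trace hM, frontalSlice_tenId (isUnit_det_of_left_inverse hM)]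

theorem tenPSD_iff [Fintype ι] (W : ι → ι → (Fin n₃ → ℝ)) :
    tenPSD M W ↔ ∀ k, (frontalSlice M W k).PosSemidef := by
  have hM' : IsUnit M.det := isUnit_det_of_left_inverse hM
  have hquad (X : ι → Fin 1 → (Fin n₃ → ℝ)) : tenInner X (tenMul M W X) =
      ∑ k, ((frontalSlice M X k)ᴴ * frontalSlice M W k * frontalSlice M X k).trace := by
    simp only [tenInner_eq_sum_trace hM, frontalSlice_tenMul hM', Matrix.mul_assoc,
      conjTranspose_eq_transpose_of_trivial]
  constructor
  · rintro ⟨hsym, hnonneg⟩ k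
    refine posSemidef_iff_dotProduct_mulVec.mpr ⟨?_, fun x => ?_⟩
    · rw [IsHermitian, conjTranspose_eq_transpose_of_trivial, ← frontalSlice_tenTrans, hsym]
    · classical
      have h := hnonneg (ofFrontalSlices M (Pi.single k (replicateCol (Fin 1) x)))
      rw [hquad, frontalSlice_ofFrontalSlices hM', Finset.sum_eq_single k] at h
      · rwa [Pi.single_eq_same, conjTranspose_replicateCol, Matrix.mul_assoc, ← replicateCol_mulVec,
          replicateRow_mul_replicateCol, trace, Fin.sum_univ_one] at h
      · intro k' _ hk'
        simp [hk']
      · simp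
  · intro h
    refine ⟨frontalSlice_injective hM' (funext fun k => ?_), fun X => ?_⟩
    · rw [frontalSlice_tenTrans, ← conjTranspose_eq_transpose_of_trivial]
      exact (h k).isHermitian
    · rw [hquad]
      exact Finset.sum_nonneg fun k _ => ((h k).conjTranspose_mul_mul_same _).trace_nonneg

theorem tenPSD_blockTensor_iff {n₁ n₂ : ℕ} {W₁ : Fin n₁ → Fin n₁ → (Fin n₃ → ℝ)}
    {A : Fin n₁ → Fin n₂ → (Fin n₃ → ℝ)} {W₂ : Fin n₂ → Fin n₂ → (Fin n₃ → ℝ)} :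
    tenPSD M (blockTensor W₁ A W₂) ↔ ∀ k, (fromBlocks (frontalSlice M W₁ k) (frontalSlice M A k)
      (frontalSlice M A k)ᵀ (frontalSlice M W₂ k)).PosSemidef := by
  simp only [tenPSD_iff hM, frontalSlice_blockTensor]

theorem tenInner_tenId_blockTensor {n₁ n₂ : ℕ} (W₁ : Fin n₁ → Fin n₁ → (Fin n₃ → ℝ))
    (A : Fin n₁ → Fin n₂ → (Fin n₃ → ℝ)) (W₂ : Fin n₂ → Fin n₂ → (Fin n₃ → ℝ)) :
    tenInner (tenId M) (blockTensor W₁ A W₂) =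
      ∑ k, ((frontalSlice M W₁ k).trace + (frontalSlice M W₂ k).trace) := by
  simp only [tenInner_tenId hM, frontalSlice_blockTensor, trace_fromBlocks]

end RealFrontalSlices

theorem nuclear_norm_MSDP_general (n₁ n₂ n₃ : ℕ)
    (M : Matrix (Fin n₃) (Fin n₃) ℝ) (hM : Mᵀ * M = 1)
    (A : Fin n₁ → Fin n₂ → (Fin n₃ → ℝ))
    (P : Fin n₃ → Matrix (Fin n₂) (Fin n₂) ℝ)
    (hP : ∀ k : Fin n₃, (P k).PosSemidef ∧
      P k * P k = (Matrix.of fun i j : _ => (M *ᵥ A i j) k)ᵀ *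
        (Matrix.of fun i j : _ => (M *ᵥ A i j) k))
    (γ : ℝ) (hγ : γ = ∑ k : Fin n₃, (P k).trace) :
    (∀ (W₁ : Fin n₁ → Fin n₁ → (Fin n₃ → ℝ)) (W₂ : Fin n₂ → Fin n₂ → (Fin n₃ → ℝ)),
      tenTrans W₁ = W₁ → tenTrans W₂ = W₂ →
      tenPSD M (blockTensor W₁ A W₂) →
      γ ≤ (1 / 2) * tenInner (tenId M) (blockTensor W₁ A W₂)) ∧
    (∃ (W₁ : Fin n₁ → Fin n₁ → (Fin n₃ → ℝ)) (W₂ : Fin n₂ → Fin n₂ → (Fin n₃ → ℝ)),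
      tenTrans W₁ = W₁ ∧ tenTrans W₂ = W₂ ∧
      tenPSD M (blockTensor W₁ A W₂) ∧
      (1 / 2) * tenInner (tenId M) (blockTensor W₁ A W₂) = γ) := by
  constructor
  · intro W₁ W₂ _ _ hW
    rw [hγ, tenInner_tenId_blockTensor hM, Finset.mul_sum]
    refine Finset.sum_le_sum fun k _ => ?_
    have := two_mul_trace_le_of_posSemidef_fromBlocks (hP k).1.isHermitian (hP k).2
      ((tenPSD_blockTensor_iff hM).mp hW k)
    linarith
  · choose W₁ W₂ hW htr using fun k =>
      exists_posSemidef_fromBlocks_trace_eq (B := frontalSlice M A k) (hP k).1 (hP k).2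
    have hM' : IsUnit M.det := isUnit_det_of_left_inverse hM
    have hPSD : tenPSD M (blockTensor (ofFrontalSlices M W₁) A (ofFrontalSlices M W₂)) :=
      (tenPSD_blockTensor_iff hM).mpr (by simpa only [frontalSlice_ofFrontalSlices hM'] using hW)
    refine ⟨_, _, ?_, ?_, hPSD, ?_⟩
    · funext i j
      exact congrFun (congrFun hPSD.1 (.inl i)) (.inl j)
    · funext i j
      exact congrFun (congrFun hPSD.1 (.inr i)) (.inr j)
    · simp only [hγ, tenInner_tenId_blockTensor hM, frontalSlice_ofFrontalSlices hM', htr,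
        ← Finset.mul_sum]
      ring

/-- For orthogonal `M`, let `γ = Σ_k trace(((Â_{:,:,k})ᵀ Â_{:,:,k})^{1/2})` be
the sum of the nuclear norms of the frontal slices of `Â = A ×₃ M` (here `P k` is the PSD
square root of `(Â_{:,:,k})ᵀ Â_{:,:,k}`). Then (i) every pair `(W₁, W₂)` of `⋆_M`-symmetric
tensors making the block tensor `W = [[W₁, A], [Aᵀ, W₂]]` `⋆_M`-PSD satisfies
`γ ≤ ½⟨ℐ_M, W⟩`, and (ii) some such pair attains `½⟨ℐ_M, W⟩ = γ`. -/
theorem nuclear_norm_MSDP (n₁ n₂ n₃ : ℕ) (hn₃ : 1 ≤ n₃)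
    (M : Matrix (Fin n₃) (Fin n₃) ℝ) (hM : Mᵀ * M = 1)
    (A : Fin n₁ → Fin n₂ → (Fin n₃ → ℝ))
    (P : Fin n₃ → Matrix (Fin n₂) (Fin n₂) ℝ)
    (hP : ∀ k : Fin n₃, (P k).PosSemidef ∧
      P k * P k = (Matrix.of fun i j : _ => (M *ᵥ A i j) k)ᵀ *
        (Matrix.of fun i j : _ => (M *ᵥ A i j) k))
    (γ : ℝ) (hγ : γ = ∑ k : Fin n₃, (P k).trace) :
    (∀ (W₁ : Fin n₁ → Fin n₁ → (Fin n₃ → ℝ)) (W₂ : Fin n₂ → Fin n₂ → (Fin n₃ → ℝ)),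
      tenTrans W₁ = W₁ → tenTrans W₂ = W₂ →
      tenPSD M (blockTensor W₁ A W₂) →
      γ ≤ (1 / 2) * tenInner (tenId M) (blockTensor W₁ A W₂)) ∧
    (∃ (W₁ : Fin n₁ → Fin n₁ → (Fin n₃ → ℝ)) (W₂ : Fin n₂ → Fin n₂ → (Fin n₃ → ℝ)),
      tenTrans W₁ = W₁ ∧ tenTrans W₂ = W₂ ∧
      tenPSD M (blockTensor W₁ A W₂) ∧
      (1 / 2) * tenInner (tenId M) (blockTensor W₁ A W₂) = γ) :=
  nuclear_norm_MSDP_general n₁ n₂ n₃ M hM A P hP γ hγ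

end
end
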